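/- arXiv:2208.05261 — 9 statements merged into one kernel-verified Lean document; each statement's English description precedes it below -/
import Mathlib

section
/- Let G=(V,E) be a finite simple graph, let f : V → {0,1,2} be any function, and let G' := G[V₀(f) ∪ V₂(f)] be the subgraph of G induced by V₀(f) ∪ V₂(f). Then f is a minimal Roman dominating function of G if and only if the following three conditions all hold: (1) N_G[V₂(f)] ∩ V₁(f) = ∅; (2) for every v ∈ V₂(f), the private neighborhood P_{G',V₂(f)}(v) is not a subset of {v}; (3) V₂(f) is a minimal dominating set of G'. -/
/-- A Roman dominating function: every vertex with value 0 has a neighbor with value 2. -/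
def IsRDF {V : Type*} (G : SimpleGraph V) (f : V → Fin 3) : Prop :=
  ∀ v, f v = 0 → ∃ u, G.Adj v u ∧ f u = 2

/-- A minimal Roman dominating function: an rdf such that no rdf `g ≠ f` satisfies `g ≤ f`. -/
def IsMinimalRDF {V : Type*} (G : SimpleGraph V) (f : V → Fin 3) : Prop :=
  IsRDF G f ∧ ∀ g : V → Fin 3, IsRDF G g → g ≤ f → g = f

/-- The number of minimal Roman dominating functions of `G`. -/
noncomputable def numMinRDF {V : Type*} (G : SimpleGraph V) : ℕ :=
  {f : V → Fin 3 | IsMinimalRDF G f}.ncard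

/-- The closed neighborhood of a vertex. -/
def closedNbhd {V : Type*} (G : SimpleGraph V) (v : V) : Set V := {u | u = v ∨ G.Adj v u}

/-- The closed neighborhood of a set of vertices. -/
def closedNbhdSet {V : Type*} (G : SimpleGraph V) (S : Set V) : Set V := ⋃ u ∈ S, closedNbhd G u

/-- A dominating set: its closed neighborhood is everything. -/
def IsDominatingSet {V : Type*} (G : SimpleGraph V) (D : Set V) : Prop :=
  closedNbhdSet G D = Set.univ

/-- A minimal dominating set: a dominating set no proper subset of which dominates. -/
def IsMinimalDominatingSet {V : Type*} (G : SimpleGraph V) (D : Set V) : Prop :=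
  IsDominatingSet G D ∧ ∀ D' ⊂ D, ¬ IsDominatingSet G D'

/-- The private neighborhood of `v` with respect to `D`: `N[v] \ N[D \ {v}]`. -/
def privateNbhd {V : Type*} (G : SimpleGraph V) (D : Set V) (v : V) : Set V :=
  closedNbhd G v \ closedNbhdSet G (D \ {v})

lemma mem_closedNbhdSet' {V : Type*} (G : SimpleGraph V) (S : Set V) (x : V) :
    x ∈ closedNbhdSet G S ↔ ∃ u ∈ S, x = u ∨ G.Adj u x := by
  simp [closedNbhdSet, closedNbhd]

lemma closedNbhdSet_mono {V : Type*} (G : SimpleGraph V) {S T : Set V} (h : S ⊆ T) :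
    closedNbhdSet G S ⊆ closedNbhdSet G T := by
  intro x hx
  rw [mem_closedNbhdSet'] at hx ⊢
  obtain ⟨u, hu, h2⟩ := hx
  exact ⟨u, h hu, h2⟩

/-- Characterization of minimal Roman dominating functions (Theorem 1):
`f` is a minimal rdf iff (1) `N[V₂(f)] ∩ V₁(f) = ∅`, (2) every `v ∈ V₂(f)` has a private
neighbor other than itself in `G' = G[V₀(f) ∪ V₂(f)]` w.r.t. `V₂(f)`, and
(3) `V₂(f)` is a minimal dominating set of `G'`. -/
theorem minimalRDF_characterization {V : Type*} [Fintype V] (G : SimpleGraph V)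
    (f : V → Fin 3) :
    IsMinimalRDF G f ↔
      (closedNbhdSet G {v | f v = 2} ∩ {v | f v = 1} = ∅) ∧
      (∀ v : ({v | f v = 0 ∨ f v = 2} : Set V), f v.1 = 2 →
        ¬ privateNbhd (G.induce {v | f v = 0 ∨ f v = 2})
            {u : ({v | f v = 0 ∨ f v = 2} : Set V) | f u.1 = 2} v ⊆ {v}) ∧
      IsMinimalDominatingSet (G.induce {v | f v = 0 ∨ f v = 2})
        {u : ({v | f v = 0 ∨ f v = 2} : Set V) | f u.1 = 2} := by
  classical
  set S : Set V := {v | f v = 0 ∨ f v = 2} with hS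
  set G' : SimpleGraph S := G.induce S with hG'
  set D : Set S := {u : S | f u.1 = 2} with hD
  constructor
  · rintro ⟨hrdf, hmin⟩
    -- condition (2)
    have cond2 : ∀ v : S, f v.1 = 2 → ¬ privateNbhd G' D v ⊆ {v} := by
      rintro ⟨v, hv⟩ hv2 hsub
      simp only at hv2
      set g := Function.update f v 1 with hg
      have hgle : g ≤ f := by
        intro w
        by_cases hw : w = v
        · subst hw; rw [hg, Function.update_self, Fin.le_def, hv2]; decide
        · rw [hg, Function.update_of_ne hw]
      have hgrdf : IsRDF G g := by
        intro w hw0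
        have hwv : w ≠ v := by
          intro h; subst h; rw [hg, Function.update_self] at hw0
          exact absurd hw0 (by decide)
        have hfw : f w = 0 := by rwa [hg, Function.update_of_ne hwv] at hw0
        obtain ⟨x, hadj, hx2⟩ := hrdf w hfw
        by_cases hxv : x = v
        · have hadjv : G.Adj w v := hxv ▸ hadj
          have hwS : w ∈ S := Or.inl hfw
          have hmem : (⟨w, hwS⟩ : S) ∈ closedNbhd G' ⟨v, hv⟩ :=
            Or.inr (by simpa [hG', SimpleGraph.induce] using hadjv.symm)
          have hnp : (⟨w, hwS⟩ : S) ∉ privateNbhd G' D ⟨v, hv⟩ := by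
            intro hp
            have := hsub hp
            simp only [Set.mem_singleton_iff, Subtype.mk.injEq] at this
            exact hwv this
          have hcn : (⟨w, hwS⟩ : S) ∈ closedNbhdSet G' (D \ {⟨v, hv⟩}) := by
            by_contra hc
            exact hnp ⟨hmem, hc⟩
          rw [mem_closedNbhdSet'] at hcn
          obtain ⟨z, ⟨hz2, hzv⟩, hcase⟩ := hcn
          rcases hcase with heq | hadj'
          · exfalso
            have h2' : f w = 2 := by rw [← heq] at hz2; exact hz2
            rw [hfw] at h2'; exact absurd h2' (by decide)
          · have hzne : z.1 ≠ v := by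
              intro h; exact hzv (Subtype.ext h)
            have : G.Adj z.1 w := by simpa [hG', SimpleGraph.induce] using hadj'
            exact ⟨z.1, this.symm, by rw [hg, Function.update_of_ne hzne]; exact hz2⟩
        · exact ⟨x, hadj, by rw [hg, Function.update_of_ne hxv]; exact hx2⟩
      have := congrFun (hmin g hgrdf hgle) v
      rw [hg, Function.update_self, hv2] at this
      exact absurd this (by decide)
    -- condition (1)
    have cond1 : closedNbhdSet G {v | f v = 2} ∩ {v | f v = 1} = ∅ := by
      rw [Set.eq_empty_iff_forall_notMem]
      rintro u ⟨hu2, hu1⟩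
      simp only [Set.mem_setOf_eq] at hu1
      rw [mem_closedNbhdSet'] at hu2
      obtain ⟨z, hz2, hcase⟩ := hu2
      simp only [Set.mem_setOf_eq] at hz2
      have hadj : G.Adj u z := by
        rcases hcase with heq | h
        · exfalso; rw [heq] at hu1; rw [hu1] at hz2
          exact absurd hz2 (by decide)
        · exact h.symm
      set g := Function.update f u 0 with hg
      have hgle : g ≤ f := by
        intro w
        by_cases hw : w = u
        · subst hw; rw [hg, Function.update_self]; exact Fin.zero_le _
        · rw [hg, Function.update_of_ne hw]
      have hgrdf : IsRDF G g := by
        intro w hw0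
        by_cases hwu : w = u
        · subst hwu
          have hzu : z ≠ w := by
            intro h; rw [h] at hz2; rw [hz2] at hu1
            exact absurd hu1 (by decide)
          exact ⟨z, hadj, by rw [hg, Function.update_of_ne hzu]; exact hz2⟩
        · have hfw : f w = 0 := by rwa [hg, Function.update_of_ne hwu] at hw0
          obtain ⟨x, hxadj, hx2⟩ := hrdf w hfw
          have hxu : x ≠ u := by
            intro h; rw [h] at hx2; rw [hx2] at hu1
            exact absurd hu1 (by decide)
          exact ⟨x, hxadj, by rw [hg, Function.update_of_ne hxu]; exact hx2⟩
      have := congrFun (hmin g hgrdf hgle) u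
      rw [hg, Function.update_self, hu1] at this
      exact absurd this (by decide)
    -- domination
    have hdom : IsDominatingSet G' D := by
      rw [IsDominatingSet, Set.eq_univ_iff_forall]
      intro x
      rw [mem_closedNbhdSet']
      rcases x.2 with hx0 | hx2
      · obtain ⟨u, hadj, hu2⟩ := hrdf x.1 hx0
        have huS : u ∈ S := Or.inr hu2
        exact ⟨⟨u, huS⟩, hu2, Or.inr (by simpa [hG', SimpleGraph.induce] using hadj.symm)⟩
      · exact ⟨x, hx2, Or.inl rfl⟩
    refine ⟨cond1, cond2, hdom, ?_⟩
    -- minimality of the dominating set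
    intro D' hsub hdom'
    obtain ⟨v, hvD, hvD'⟩ := Set.exists_of_ssubset hsub
    obtain ⟨u, hup, -⟩ := Set.not_subset.mp (cond2 v hvD)
    have hsub2 : D' ⊆ D \ {v} := by
      intro z hz
      refine ⟨hsub.1 hz, ?_⟩
      intro h
      rw [Set.mem_singleton_iff] at h
      exact hvD' (h ▸ hz)
    have : u ∈ closedNbhdSet G' D' := by rw [hdom']; trivial
    exact hup.2 (closedNbhdSet_mono G' hsub2 this)
  · rintro ⟨h1, h2, hdom, hmindom⟩
    have hrdf : IsRDF G f := by
      intro v hv0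
      have hvS : v ∈ S := Or.inl hv0
      have hdomeq : closedNbhdSet G' D = Set.univ := hdom
      have hmem : (⟨v, hvS⟩ : S) ∈ closedNbhdSet G' D := by
        rw [hdomeq]; trivial
      rw [mem_closedNbhdSet'] at hmem
      obtain ⟨z, hz2, hcase⟩ := hmem
      rcases hcase with heq | hadj
      · exfalso
        have h2' : f v = 2 := by rw [← heq] at hz2; exact hz2
        rw [hv0] at h2'
        exact absurd h2' (by decide)
      · have : G.Adj z.1 v := by simpa [hG', SimpleGraph.induce] using hadj
        exact ⟨z.1, this.symm, hz2⟩
    refine ⟨hrdf, ?_⟩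
    intro g hg hgle
    funext v
    have hle : (g v).val ≤ (f v).val := hgle v
    have hcases : f v = 0 ∨ f v = 1 ∨ f v = 2 := by omega
    rcases hcases with hv | hv | hv
    · omega
    · by_contra hne
      have hgv : g v = 0 := by omega
      obtain ⟨u, hadj, hu2⟩ := hg v hgv
      have hfu : f u = 2 := by
        have : (g u).val ≤ (f u).val := hgle u
        omega
      have : v ∈ closedNbhdSet G {v | f v = 2} ∩ {v | f v = 1} := by
        refine ⟨?_, hv⟩
        rw [mem_closedNbhdSet']
        exact ⟨u, hfu, Or.inr hadj.symm⟩
      rw [h1] at this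
      exact this
    · by_contra hne
      have hgv : g v ≠ 2 := by omega
      have hvS : v ∈ S := Or.inr hv
      obtain ⟨u, hup, hune⟩ := Set.not_subset.mp (h2 ⟨v, hvS⟩ hv)
      rw [Set.mem_singleton_iff] at hune
      have hadj : G.Adj v u.1 := by
        rcases hup.1 with heq | h
        · exact absurd heq hune
        · simpa [hG', SimpleGraph.induce] using h
      rcases u.2 with hu0 | hu2
      · have hgu : g u.1 = 0 := by
          have : (g u.1).val ≤ (f u.1).val := hgle u.1
          omega
        obtain ⟨w, hwadj, hw2⟩ := hg u.1 hgu
        have hfw : f w = 2 := by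
          have : (g w).val ≤ (f w).val := hgle w
          omega
        have hwv : w ≠ v := by
          intro h; rw [h] at hw2; exact hgv hw2
        have hwS : w ∈ S := Or.inr hfw
        refine hup.2 ?_
        rw [mem_closedNbhdSet']
        refine ⟨⟨w, hwS⟩, ⟨hfw, ?_⟩, Or.inr ?_⟩
        · intro h
          rw [Set.mem_singleton_iff] at h
          exact hwv (congrArg Subtype.val h)
        · simpa [hG', SimpleGraph.induce] using hwadj.symm
      · refine hup.2 ?_
        rw [mem_closedNbhdSet']
        refine ⟨u, ⟨hu2, ?_⟩, Or.inl rfl⟩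
        rw [Set.mem_singleton_iff]
        exact hune
end

section
/- Let G=(V,E) be a split graph whose vertex set is partitioned into a clique C and an independent set I, and let f : V → {0,1,2} be a minimal Roman dominating function of G. Then V₂(f) ⊆ C or V₂(f) ⊆ I; that is, V₂(f) cannot contain both a vertex of C and a vertex of I. -/
section

variable {V : Type*} {G : SimpleGraph V} {f : V → Fin 3} {v : V}

theorem IsMinimalRDF.not_isRDF_update_one [DecidableEq V] (hf : IsMinimalRDF G f)
    (hv : f v = 2) : ¬ IsRDF G (Function.update f v 1) := by
  intro hg
  have hle : Function.update f v 1 ≤ f := by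
    intro u
    rcases eq_or_ne u v with rfl | hu
    · simp [hv, Fin.le_def]
    · simp [hu]
  have := congrFun (hf.2 _ hg hle) v
  simp [hv] at this

theorem IsMinimalRDF.exists_private_neighbor (hf : IsMinimalRDF G f) (hv : f v = 2) :
    ∃ w, G.Adj w v ∧ f w = 0 ∧ ∀ u, G.Adj w u → f u = 2 → u = v := by
  classical
  have hg := hf.not_isRDF_update_one hv
  simp only [IsRDF, not_forall, not_exists, not_and] at hg
  obtain ⟨w, hw0, hw⟩ := hg
  have hwv : w ≠ v := by
    rintro rfl
    simp at hw0
  have hfw : f w = 0 := by simpa [hwv] using hw0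
  have hprivate : ∀ u, G.Adj w u → f u = 2 → u = v := by
    intro u hadj hu
    by_contra huv
    exact hw u hadj (by simpa [huv] using hu)
  obtain ⟨u, hadj, hu⟩ := hf.1 w hfw
  exact ⟨w, hprivate u hadj hu ▸ hadj, hfw, hprivate⟩

end

theorem splitGraph_V2_subset_general {V : Type*} (G : SimpleGraph V) (C I : Set V)
    (hpart : C ∪ I = Set.univ)
    (hC : G.IsClique C) (hI : ∀ u ∈ I, ∀ w ∈ I, ¬ G.Adj u w)
    (f : V → Fin 3) (hf : IsMinimalRDF G f) :
    {v | f v = 2} ⊆ C ∨ {v | f v = 2} ⊆ I := by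
  have hmem : ∀ v, v ∈ C ∨ v ∈ I := fun v => Set.mem_union v C I |>.mp (hpart ▸ Set.mem_univ v)
  by_contra! h
  obtain ⟨⟨i, hi2, hiC⟩, ⟨c, hc2, hcI⟩⟩ := And.imp Set.not_subset.mp Set.not_subset.mp h
  have hiI : i ∈ I := (hmem i).resolve_left hiC
  have hcC : c ∈ C := (hmem c).resolve_right hcI
  obtain ⟨w, hwi, hw0, hprivate⟩ := hf.exists_private_neighbor hi2
  have hwC : w ∈ C := (hmem w).resolve_right fun hwI => hI w hwI i hiI hwi
  have hwc : w ≠ c := fun h => by simp [h] at hw0; simp [hw0] at hc2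
  exact hcI (hprivate c (hC hwC hcC hwc) hc2 ▸ hiI)

/-- In a split graph with clique `C` and independent set `I`, the set `V₂(f)` of a minimal
Roman dominating function cannot contain both a vertex of `C` and a vertex of `I`. -/
theorem splitGraph_V2_subset {V : Type*} [Fintype V] (G : SimpleGraph V) (C I : Set V)
    (hpart : C ∪ I = Set.univ) (hdisj : Disjoint C I)
    (hC : G.IsClique C) (hI : ∀ u ∈ I, ∀ w ∈ I, ¬ G.Adj u w)
    (f : V → Fin 3) (hf : IsMinimalRDF G f) :
    {v | f v = 2} ⊆ C ∨ {v | f v = 2} ⊆ I :=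
  splitGraph_V2_subset_general G C I hpart hC hI f hf
end

section
/- For every n ≥ 1, let G be the split graph with vertex set {c₁,…,c_n} ∪ {v₁,…,v_n} whose edge set consists of all pairs {c_i,c_j} with i≠j together with the edges {c_i,v_i} for each i ∈ {1,…,n}. Then G has exactly 2^{n+1} − 1 minimal Roman dominating functions. -/
/-- The split graph on `{c₁,…,cₙ} ∪ {v₁,…,vₙ}`: the `cᵢ` form a clique, the `vᵢ` are
independent, and `cᵢ` is additionally adjacent exactly to `vᵢ`. -/
def splitLowerBoundGraph (n : ℕ) : SimpleGraph (Fin n ⊕ Fin n) :=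
  SimpleGraph.fromRel (fun x y =>
    (∃ i j, x = Sum.inl i ∧ y = Sum.inl j) ∨ (∃ i, x = Sum.inl i ∧ y = Sum.inr i))

namespace SplitCount

variable {n : ℕ}

lemma adj_ll {i j : Fin n} : (splitLowerBoundGraph n).Adj (Sum.inl i) (Sum.inl j) ↔ i ≠ j := by
  simp [splitLowerBoundGraph, SimpleGraph.fromRel_adj]

lemma adj_lr {i j : Fin n} : (splitLowerBoundGraph n).Adj (Sum.inl i) (Sum.inr j) ↔ i = j := by
  simp [splitLowerBoundGraph, SimpleGraph.fromRel_adj]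
  tauto

lemma adj_rl {i j : Fin n} : (splitLowerBoundGraph n).Adj (Sum.inr i) (Sum.inl j) ↔ i = j := by
  simp [splitLowerBoundGraph, SimpleGraph.fromRel_adj]

lemma adj_rr {i j : Fin n} : ¬ (splitLowerBoundGraph n).Adj (Sum.inr i) (Sum.inr j) := by
  simp [splitLowerBoundGraph, SimpleGraph.fromRel_adj]

lemma h0 : ∀ a : Fin 3, a ≤ 0 → a = 0 := by decide
lemma h1 : ∀ a : Fin 3, a ≤ 1 → a ≠ 0 → a = 1 := by decide
lemma h2 : ∀ a : Fin 3, a ≤ 1 → a ≠ 2 := by decide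
lemma hcases : ∀ a : Fin 3, a = 0 ∨ a = 1 ∨ a = 2 := by decide

/-- Type A minimal rdf: clique vertices in `S` get `2`. -/
def fA (S : Finset (Fin n)) : Fin n ⊕ Fin n → Fin 3
  | .inl i => if i ∈ S then 2 else 0
  | .inr i => if i ∈ S then 0 else 1

/-- Type B minimal rdf: pendant vertices in `T` get `2`. -/
def fB (T : Finset (Fin n)) : Fin n ⊕ Fin n → Fin 3
  | .inl i => if i ∈ T then 0 else 1
  | .inr i => if i ∈ T then 2 else 1

lemma minA {S : Finset (Fin n)} (hS : S.Nonempty) :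
    IsMinimalRDF (splitLowerBoundGraph n) (fA S) := by
  obtain ⟨k, hk⟩ := hS
  constructor
  · intro v hv
    cases v with
    | inl i =>
      simp only [fA] at hv
      by_cases hi : i ∈ S
      · simp [hi] at hv
      · refine ⟨Sum.inl k, adj_ll.2 ?_, by simp [fA, hk]⟩
        rintro rfl; exact hi hk
    | inr i =>
      simp only [fA] at hv
      by_cases hi : i ∈ S
      · exact ⟨Sum.inl i, adj_rl.2 rfl, by simp [fA, hi]⟩
      · simp [hi] at hv
  · intro g hg hle
    funext v
    cases v with
    | inl i =>
      by_cases hi : i ∈ S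
      · -- g (inr i) = 0, its only possible defender is inl i
        have hri : g (Sum.inr i) = 0 := h0 _ (by simpa [fA, hi] using hle (Sum.inr i))
        obtain ⟨u, hu, hu2⟩ := hg _ hri
        cases u with
        | inl j =>
          obtain rfl := adj_rl.1 hu
          simp [fA, hi, hu2]
        | inr j => exact absurd hu adj_rr
      · exact h0 _ (by simpa [fA, hi] using hle (Sum.inl i)) |>.trans (by simp [fA, hi])
    | inr i =>
      by_cases hi : i ∈ S
      · exact (h0 _ (by simpa [fA, hi] using hle (Sum.inr i))).trans (by simp [fA, hi])
      · have hle1 : g (Sum.inr i) ≤ 1 := by simpa [fA, hi] using hle (Sum.inr i)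
        refine (h1 _ hle1 ?_).trans (by simp [fA, hi])
        intro h00
        obtain ⟨u, hu, hu2⟩ := hg _ h00
        cases u with
        | inl j =>
          obtain rfl := adj_rl.1 hu
          have := h0 _ (by simpa [fA, hi] using hle (Sum.inl i))
          rw [this] at hu2; exact absurd hu2 (by decide)
        | inr j => exact absurd hu adj_rr

lemma minB {T : Finset (Fin n)} :
    IsMinimalRDF (splitLowerBoundGraph n) (fB T) := by
  have hBl : ∀ j : Fin n, (fB T) (Sum.inl j) ≤ 1 := by
    intro j; by_cases hj : j ∈ T <;> simp [fB, hj]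
  constructor
  · intro v hv
    cases v with
    | inl i =>
      simp only [fB] at hv
      by_cases hi : i ∈ T
      · exact ⟨Sum.inr i, adj_lr.2 rfl, by simp [fB, hi]⟩
      · simp [hi] at hv
    | inr i =>
      simp only [fB] at hv
      by_cases hi : i ∈ T <;> simp [hi] at hv
  · intro g hg hle
    have hgl : ∀ j : Fin n, g (Sum.inl j) ≠ 2 := fun j =>
      h2 _ ((hle (Sum.inl j)).trans (hBl j))
    funext v
    cases v with
    | inl i =>
      by_cases hi : i ∈ T
      · exact (h0 _ (by simpa [fB, hi] using hle (Sum.inl i))).trans (by simp [fB, hi])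
      · have hle1 : g (Sum.inl i) ≤ 1 := by simpa [fB, hi] using hle (Sum.inl i)
        refine (h1 _ hle1 ?_).trans (by simp [fB, hi])
        intro h00
        obtain ⟨u, hu, hu2⟩ := hg _ h00
        cases u with
        | inl j => exact hgl j hu2
        | inr j =>
          obtain rfl := adj_lr.1 hu
          have : g (Sum.inr i) ≤ 1 := by simpa [fB, hi] using hle (Sum.inr i)
          exact h2 _ this hu2
    | inr i =>
      by_cases hi : i ∈ T
      · -- g (inl i) = 0, defender must be inr i
        have hli : g (Sum.inl i) = 0 := h0 _ (by simpa [fB, hi] using hle (Sum.inl i))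
        obtain ⟨u, hu, hu2⟩ := hg _ hli
        cases u with
        | inl j => exact absurd hu2 (hgl j)
        | inr j =>
          obtain rfl := adj_lr.1 hu
          simp [fB, hi, hu2]
      · have hle1 : g (Sum.inr i) ≤ 1 := by simpa [fB, hi] using hle (Sum.inr i)
        refine (h1 _ hle1 ?_).trans (by simp [fB, hi])
        intro h00
        obtain ⟨u, hu, hu2⟩ := hg _ h00
        cases u with
        | inl j => exact hgl j hu2
        | inr j => exact absurd hu adj_rr


lemma not_min_lower {f : Fin n ⊕ Fin n → Fin 3}
    (hf : IsMinimalRDF (splitLowerBoundGraph n) f) {x : Fin n ⊕ Fin n} {b : Fin 3}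
    (hlt : b < f x) (hrdf : IsRDF (splitLowerBoundGraph n) (Function.update f x b)) : False := by
  have heq := hf.2 _ hrdf (fun v => by
    rcases eq_or_ne v x with rfl | h
    · simp [le_of_lt hlt]
    · simp [Function.update_of_ne h])
  have := congrFun heq x
  simp at this
  exact absurd this (ne_of_lt hlt)

lemma charact {f : Fin n ⊕ Fin n → Fin 3}
    (hf : IsMinimalRDF (splitLowerBoundGraph n) f) :
    (∃ S : Finset (Fin n), S.Nonempty ∧ f = fA S) ∨ (∃ T : Finset (Fin n), f = fB T) := by
  classical
  by_cases hS : ∃ k, f (Sum.inl k) = 2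
  · left
    obtain ⟨k, hk⟩ := hS
    -- no pendant vertex has value 2
    have hT : ∀ l, f (Sum.inr l) ≠ 2 := by
      intro l hl
      refine not_min_lower hf (x := Sum.inr l) (b := 1) (by rw [hl]; decide) ?_
      intro v hv
      have hvne : v ≠ Sum.inr l := by
        intro rfl0; rw [rfl0] at hv; simp at hv
      rw [Function.update_of_ne hvne] at hv
      obtain ⟨u, hu, hu2⟩ := hf.1 v hv
      rcases eq_or_ne u (Sum.inr l) with rfl | hune
      · -- v must be inl l; use inl k instead
        have hvl : v = Sum.inl l := by
          cases v with
          | inl j => obtain rfl := adj_lr.1 hu; rfl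
          | inr j => exact absurd hu adj_rr
        subst hvl
        have hkl : l ≠ k := by intro h; rw [h, hk] at hv; exact absurd hv (by decide)
        exact ⟨Sum.inl k, adj_ll.2 hkl, by rw [Function.update_of_ne (by simp)]; exact hk⟩
      · exact ⟨u, hu, by rwa [Function.update_of_ne hune]⟩
    -- clique vertices not equal to 2 are 0
    have hc0 : ∀ j, f (Sum.inl j) ≠ 2 → f (Sum.inl j) = 0 := by
      intro j hj2
      rcases hcases (f (Sum.inl j)) with h | h | h
      · exact h
      · exfalso
        refine not_min_lower hf (x := Sum.inl j) (b := 0) (by rw [h]; decide) ?_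
        intro v hv
        rcases eq_or_ne v (Sum.inl j) with rfl | hvne
        · have hjk : j ≠ k := by intro e; rw [e, hk] at h; exact absurd h (by decide)
          exact ⟨Sum.inl k, adj_ll.2 hjk, by
            rw [Function.update_of_ne (by simp [Ne, Sum.inl.injEq]; exact fun e => hjk e.symm)]; exact hk⟩
        · rw [Function.update_of_ne hvne] at hv
          obtain ⟨u, hu, hu2⟩ := hf.1 v hv
          have hune : u ≠ Sum.inl j := by intro e; rw [e, h] at hu2; exact absurd hu2 (by decide)
          exact ⟨u, hu, by rwa [Function.update_of_ne hune]⟩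
      · exact absurd h hj2
    -- pendants of 2-clique-vertices are 0
    have hp0 : ∀ k', f (Sum.inl k') = 2 → f (Sum.inr k') = 0 := by
      intro k' hk'
      rcases hcases (f (Sum.inr k')) with h | h | h
      · exact h
      · exfalso
        refine not_min_lower hf (x := Sum.inr k') (b := 0) (by rw [h]; decide) ?_
        intro v hv
        rcases eq_or_ne v (Sum.inr k') with rfl | hvne
        · exact ⟨Sum.inl k', adj_rl.2 rfl, by rw [Function.update_of_ne (by simp)]; exact hk'⟩
        · rw [Function.update_of_ne hvne] at hv
          obtain ⟨u, hu, hu2⟩ := hf.1 v hv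
          have hune : u ≠ Sum.inr k' := by intro e; rw [e, h] at hu2; exact absurd hu2 (by decide)
          exact ⟨u, hu, by rwa [Function.update_of_ne hune]⟩
      · exact absurd h (hT k')
    -- pendants of non-2 clique vertices are 1
    have hp1 : ∀ j, f (Sum.inl j) ≠ 2 → f (Sum.inr j) = 1 := by
      intro j hj2
      rcases hcases (f (Sum.inr j)) with h | h | h
      · exfalso
        obtain ⟨u, hu, hu2⟩ := hf.1 _ h
        cases u with
        | inl i => obtain rfl := adj_rl.1 hu; exact hj2 hu2
        | inr i => exact absurd hu adj_rr
      · exact h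
      · exact absurd h (hT j)
    refine ⟨Finset.univ.filter (fun i => f (Sum.inl i) = 2), ⟨k, by simp [hk]⟩, ?_⟩
    funext v
    cases v with
    | inl i =>
      by_cases hi : f (Sum.inl i) = 2
      · simp [fA, hi]
      · simp [fA, hi, hc0 i hi]
    | inr i =>
      by_cases hi : f (Sum.inl i) = 2
      · simp [fA, hi, hp0 i hi]
      · simp [fA, hi, hp1 i hi]
  · right
    push_neg at hS
    have hc0 : ∀ i, f (Sum.inr i) = 2 → f (Sum.inl i) = 0 := by
      intro i hi
      rcases hcases (f (Sum.inl i)) with h | h | h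
      · exact h
      · exfalso
        refine not_min_lower hf (x := Sum.inl i) (b := 0) (by rw [h]; decide) ?_
        intro v hv
        rcases eq_or_ne v (Sum.inl i) with rfl | hvne
        · exact ⟨Sum.inr i, adj_lr.2 rfl, by rw [Function.update_of_ne (by simp)]; exact hi⟩
        · rw [Function.update_of_ne hvne] at hv
          obtain ⟨u, hu, hu2⟩ := hf.1 v hv
          have hune : u ≠ Sum.inl i := by intro e; rw [e, h] at hu2; exact absurd hu2 (by decide)
          exact ⟨u, hu, by rwa [Function.update_of_ne hune]⟩
      · exact absurd h (hS i)
    have hc1 : ∀ i, f (Sum.inr i) ≠ 2 → f (Sum.inl i) = 1 := by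
      intro i hi
      rcases hcases (f (Sum.inl i)) with h | h | h
      · exfalso
        obtain ⟨u, hu, hu2⟩ := hf.1 _ h
        cases u with
        | inl j => exact hS j hu2
        | inr j => obtain rfl := adj_lr.1 hu; exact hi hu2
      · exact h
      · exact absurd h (hS i)
    have hp1 : ∀ i, f (Sum.inr i) ≠ 2 → f (Sum.inr i) = 1 := by
      intro i hi
      rcases hcases (f (Sum.inr i)) with h | h | h
      · exfalso
        obtain ⟨u, hu, hu2⟩ := hf.1 _ h
        cases u with
        | inl j => exact hS j hu2
        | inr j => exact absurd hu adj_rr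
      · exact h
      · exact absurd h hi
    refine ⟨Finset.univ.filter (fun i => f (Sum.inr i) = 2), ?_⟩
    funext v
    cases v with
    | inl i =>
      by_cases hi : f (Sum.inr i) = 2
      · simp [fB, hi, hc0 i hi]
      · simp [fB, hi, hc1 i hi]
    | inr i =>
      by_cases hi : f (Sum.inr i) = 2
      · simp [fB, hi]
      · simp [fB, hi, hp1 i hi]

lemma fA_inj : Function.Injective (fA (n := n)) := by
  intro S S' h
  ext i
  have := congrFun h (Sum.inl i)
  by_cases hi : i ∈ S <;> by_cases hi' : i ∈ S' <;>
    simp [fA, hi, hi'] at this ⊢ <;> simp_all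

lemma fB_inj : Function.Injective (fB (n := n)) := by
  intro S S' h
  ext i
  have := congrFun h (Sum.inr i)
  by_cases hi : i ∈ S <;> by_cases hi' : i ∈ S' <;>
    simp [fB, hi, hi'] at this ⊢ <;> simp_all

lemma set_eq :
    {f : Fin n ⊕ Fin n → Fin 3 | IsMinimalRDF (splitLowerBoundGraph n) f} =
      (fA '' {S : Finset (Fin n) | S.Nonempty}) ∪ (fB '' (Set.univ : Set (Finset (Fin n)))) := by
  ext f
  constructor
  · intro hf
    rcases charact hf with ⟨S, hS, rfl⟩ | ⟨T, rfl⟩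
    · exact Or.inl ⟨S, hS, rfl⟩
    · exact Or.inr ⟨T, trivial, rfl⟩
  · rintro (⟨S, hS, rfl⟩ | ⟨T, -, rfl⟩)
    · exact minA hS
    · exact minB

lemma images_disjoint :
    Disjoint (fA '' {S : Finset (Fin n) | S.Nonempty})
      (fB '' (Set.univ : Set (Finset (Fin n)))) := by
  rw [Set.disjoint_left]
  rintro f ⟨S, hS, rfl⟩ ⟨T, -, hT⟩
  obtain ⟨k, hk⟩ := hS
  have := congrFun hT (Sum.inl k)
  by_cases hkT : k ∈ T <;> simp [fA, fB, hk, hkT] at this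

end SplitCount

/-- The split graph above has exactly `2^(n+1) - 1` minimal Roman dominating functions. -/
theorem splitGraph_count (n : ℕ) (hn : 1 ≤ n) :
    numMinRDF (splitLowerBoundGraph n) = 2 ^ (n + 1) - 1 := by
  classical
  unfold numMinRDF
  rw [SplitCount.set_eq, Set.ncard_union_eq SplitCount.images_disjoint (Set.toFinite _)
    (Set.toFinite _), Set.ncard_image_of_injective _ SplitCount.fA_inj,
    Set.ncard_image_of_injective _ SplitCount.fB_inj]
  have h1 : {S : Finset (Fin n) | S.Nonempty}.ncard = 2 ^ n - 1 := by
    have he : {S : Finset (Fin n) | S.Nonempty} =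
        ↑((Finset.univ : Finset (Finset (Fin n))).erase ∅) := by
      ext S; simp [Finset.nonempty_iff_ne_empty]
    rw [he, Set.ncard_coe_finset, Finset.card_erase_of_mem (Finset.mem_univ _),
      Finset.card_univ, Fintype.card_finset, Fintype.card_fin]
  have h2 : (Set.univ : Set (Finset (Fin n))).ncard = 2 ^ n := by
    rw [Set.ncard_univ, Nat.card_eq_fintype_card, Fintype.card_finset, Fintype.card_fin]
  have hone : 1 ≤ 2 ^ n := Nat.one_le_two_pow
  have hp : 2 ^ (n + 1) = 2 * 2 ^ n := by ring
  omega
end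

section
/- The quantity C_{P,2,n} satisfies: C_{P,2,1} = 0, C_{P,2,2} = 1, and for every n > 2, C_{P,2,n} = C_{P,2̄,n−2}. -/
/-- `C_{P,n}`: the number of minimal Roman dominating functions of the path `Pₙ`. -/
noncomputable def CP (n : ℕ) : ℕ := numMinRDF (SimpleGraph.pathGraph n)

/-- `C_{P,2,n}`: the number of minimal rdf `f` of `Pₙ` with `f(v₁) = 2`. -/
noncomputable def CP2 (n : ℕ) : ℕ :=
  {f : Fin n → Fin 3 | IsMinimalRDF (SimpleGraph.pathGraph n) f ∧
    ∃ h : 0 < n, f ⟨0, h⟩ = 2}.ncard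

/-- `C_{P,2̄,n}`: the number of minimal rdf `f` of `Pₙ` with `f(v₁) ≠ 2`. -/
noncomputable def CPbar2 (n : ℕ) : ℕ :=
  {f : Fin n → Fin 3 | IsMinimalRDF (SimpleGraph.pathGraph n) f ∧
    ∀ h : 0 < n, f ⟨0, h⟩ ≠ 2}.ncard

/-!
A minimal rdf is characterised locally: no vertex labelled 1 has a neighbour labelled 2, and
every vertex labelled 2 has a private neighbour, i.e. a neighbour labelled 0 none of whose other
neighbours is labelled 2. On a path with `f v₁ = 2` the private neighbour can only be `v₂`, so
`f = (2, 0, g)`; and `(2, 0, g)` is a minimal rdf of `Pₙ` exactly when `g` is a minimal rdf of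
`Pₙ₋₂` with `g v₁ ≠ 2` (which keeps `v₂` private to `v₁`). For `n = 1` there is no private
neighbour, and for `n = 2` the function `g` is the empty one.
-/

open SimpleGraph Function

section RomanDomination

variable {V : Type*} {G : SimpleGraph V} {f : V → Fin 3}

theorem IsRDF.update_zero [DecidableEq V] (hf : IsRDF G f) {v u : V} (hvu : G.Adj v u)
    (hu : f u = 2) (hv : f v ≠ 2) : IsRDF G (update f v 0) := by
  intro w hw
  by_cases hwv : w = v
  · subst hwv
    exact ⟨u, hvu, by rwa [update_of_ne hvu.ne.symm]⟩
  · obtain ⟨x, hwx, hx⟩ := hf w (by rwa [update_of_ne hwv] at hw)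
    have hxv : x ≠ v := by rintro rfl; exact hv hx
    exact ⟨x, hwx, by rwa [update_of_ne hxv]⟩

theorem IsRDF.update_one [DecidableEq V] (hf : IsRDF G f) {v : V}
    (hv : ∀ u, G.Adj v u → f u = 0 → ∃ w, G.Adj u w ∧ w ≠ v ∧ f w = 2) :
    IsRDF G (update f v 1) := by
  intro w hw
  have hwv : w ≠ v := by rintro rfl; simp at hw
  rw [update_of_ne hwv] at hw
  obtain ⟨x, hwx, hx⟩ := hf w hw
  by_cases hxv : x = v
  · subst hxv
    obtain ⟨y, hwy, hyx, hy⟩ := hv w hwx.symm hw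
    exact ⟨y, hwy, by rwa [update_of_ne hyx]⟩
  · exact ⟨x, hwx, by rwa [update_of_ne hxv]⟩

theorem isMinimalRDF_iff :
    IsMinimalRDF G f ↔ IsRDF G f ∧
      (∀ v, f v = 1 → ∀ u, G.Adj v u → f u ≠ 2) ∧
      (∀ v, f v = 2 → ∃ u, G.Adj v u ∧ f u = 0 ∧ ∀ w, G.Adj u w → w ≠ v → f w ≠ 2) := by
  classical
  constructor
  · rintro ⟨hf, hmin⟩
    have hfix : ∀ v a, a ≤ f v → IsRDF G (update f v a) → a = f v := fun v a ha h =>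
      update_eq_self_iff.1 (hmin _ h (update_le_iff.2 ⟨ha, fun _ _ => le_rfl⟩))
    refine ⟨hf, fun v hv u hvu hu => ?_, fun v hv => ?_⟩
    · exact absurd (hfix v 0 (by simp [hv]) (hf.update_zero hvu hu (by simp [hv]))) (by simp [hv])
    · by_contra! h
      exact absurd (hfix v 1 (by simp [hv]) (hf.update_one fun u hvu hu => by
        simpa using h u hvu hu)) (by simp [hv])
  · rintro ⟨hf, hone, htwo⟩
    refine ⟨hf, fun g hg hgf => le_antisymm hgf fun v => show f v ≤ g v from ?_⟩
    have hle (u : V) : g u ≤ f u := hgf u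
    have key : f v = 0 ∨ f v = 1 ∨ f v = 2 := by omega
    rcases key with h | h | h
    · simp [h]
    · by_contra hlt
      obtain ⟨u, hvu, hu⟩ := hg v (by omega)
      exact hone v h u hvu (by have := hle u; omega)
    · obtain ⟨u, hvu, hu, hpriv⟩ := htwo v h
      obtain ⟨w, huw, hw⟩ := hg u (by have := hle u; omega)
      obtain rfl : w = v := by_contra fun hwv => hpriv w huw hwv (by have := hle w; omega)
      omega

theorem IsMinimalRDF.exists_adj_eq_zero (hf : IsMinimalRDF G f) {v : V} (hv : f v = 2) :
    ∃ u, G.Adj v u ∧ f u = 0 := by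
  obtain ⟨u, hvu, hu, -⟩ := (isMinimalRDF_iff.1 hf).2.2 v hv
  exact ⟨u, hvu, hu⟩

end RomanDomination

namespace SimpleGraph

variable {n : ℕ}

@[simp] theorem pathGraph_adj_succ_succ {i j : Fin n} :
    (pathGraph (n + 1)).Adj i.succ j.succ ↔ (pathGraph n).Adj i j := by
  simp only [pathGraph_adj, Fin.val_succ]; omega

@[simp] theorem pathGraph_adj_zero_succ {j : Fin n} :
    (pathGraph (n + 1)).Adj 0 j.succ ↔ (j : ℕ) = 0 := by
  simp only [pathGraph_adj, Fin.val_succ, Fin.val_zero]; omega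

@[simp] theorem pathGraph_adj_succ_zero {i : Fin n} :
    (pathGraph (n + 1)).Adj i.succ 0 ↔ (i : ℕ) = 0 := by
  rw [adj_comm, pathGraph_adj_zero_succ]

theorem pathGraph_adj_zero_iff {u : Fin (n + 2)} : (pathGraph (n + 2)).Adj 0 u ↔ u = 1 := by
  simp only [pathGraph_adj, Fin.ext_iff, Fin.val_zero, Fin.val_one]; omega

end SimpleGraph

theorem isMinimalRDF_pathGraph_cons_two_cons_zero {m : ℕ} (g : Fin m → Fin 3) :
    IsMinimalRDF (pathGraph (m + 2)) (Fin.cons 2 (Fin.cons 0 g : Fin (m + 1) → Fin 3)) ↔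
      IsMinimalRDF (pathGraph m) g ∧ ∀ h : 0 < m, g ⟨0, h⟩ ≠ 2 := by
  have hfirst : (∀ h : 0 < m, g ⟨0, h⟩ ≠ 2) ↔ ∀ i : Fin m, (i : ℕ) = 0 → g i ≠ 2 :=
    ⟨fun H i hi => by convert H (by omega), fun H h => H _ rfl⟩
  rw [hfirst]
  simp only [isMinimalRDF_iff, IsRDF, Fin.forall_fin_succ, Fin.exists_fin_succ, Fin.cons_zero,
    Fin.cons_succ, Fin.isValue, Fin.succ_zero_eq_one, Fin.reduceEq, SimpleGraph.irrefl,
    pathGraph_adj_zero_succ, pathGraph_adj_succ_zero, pathGraph_adj_succ_succ,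
    pathGraph_adj_zero_iff.2 rfl, Fin.val_succ, Fin.val_eq_zero_iff, Nat.add_eq_zero_iff,
    Fin.succ_ne_zero, (Fin.succ_ne_zero _).symm, Fin.succ_inj, one_ne_zero, zero_ne_one, ne_eq,
    and_true, and_false, true_and, false_and, and_self, or_false, false_or, true_or, or_self,
    exists_false, imp_self, imp_false, implies_true, forall_const, IsEmpty.forall_iff,
    not_true_eq_false, not_false_eq_true, Decidable.not_not]
  tauto

theorem not_isMinimalRDF_pathGraph_one (f : Fin 1 → Fin 3) (h : f 0 = 2) :
    ¬ IsMinimalRDF (pathGraph 1) f := fun hf => by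
  obtain ⟨u, h0u, -⟩ := hf.exists_adj_eq_zero h
  exact h0u.ne (Subsingleton.elim _ _)

theorem IsMinimalRDF.eq_cons_two_cons_zero {m : ℕ} {f : Fin (m + 2) → Fin 3}
    (hf : IsMinimalRDF (pathGraph (m + 2)) f) (h : f 0 = 2) :
    f = Fin.cons 2 (Fin.cons 0 (Fin.tail (Fin.tail f)) : Fin (m + 1) → Fin 3) := by
  obtain ⟨u, h0u, hu⟩ := hf.exists_adj_eq_zero h
  rw [pathGraph_adj_zero_iff] at h0u
  subst h0u
  rw [← h, ← hu]
  conv_lhs => rw [← Fin.cons_self_tail f, ← Fin.cons_self_tail (Fin.tail f)]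
  rfl

theorem CP2_one : CP2 1 = 0 := by
  rw [CP2, Set.ncard_eq_zero]
  exact Set.eq_empty_of_forall_notMem fun f ⟨hf, _, h⟩ => not_isMinimalRDF_pathGraph_one f h hf

theorem CPbar2_zero : CPbar2 0 = 1 := by
  have huniv : {g : Fin 0 → Fin 3 | IsMinimalRDF (pathGraph 0) g ∧ ∀ h : 0 < 0, g ⟨0, h⟩ ≠ 2} =
      Set.univ :=
    Set.eq_univ_of_forall fun _ =>
      ⟨⟨fun v => v.elim0, fun _ _ _ => Subsingleton.elim _ _⟩, fun h => absurd h (lt_irrefl 0)⟩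
  rw [CPbar2, huniv, Set.ncard_univ, Nat.card_unique]

theorem CP2_add_two (m : ℕ) : CP2 (m + 2) = CPbar2 m := by
  set prepend : (Fin m → Fin 3) → Fin (m + 2) → Fin 3 := fun g => Fin.cons 2 (Fin.cons 0 g)
  have hprepend : Injective prepend := fun _ _ h =>
    Fin.cons_right_injective _ (Fin.cons_right_injective _ h)
  have himage : {f : Fin (m + 2) → Fin 3 | IsMinimalRDF (pathGraph (m + 2)) f ∧
      ∃ h : 0 < m + 2, f ⟨0, h⟩ = 2} =
      prepend '' {g | IsMinimalRDF (pathGraph m) g ∧ ∀ h : 0 < m, g ⟨0, h⟩ ≠ 2} := by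
    ext f
    constructor
    · rintro ⟨hf, _, h⟩
      have hf_eq := hf.eq_cons_two_cons_zero h
      exact ⟨_, (isMinimalRDF_pathGraph_cons_two_cons_zero _).1 (hf_eq ▸ hf), hf_eq.symm⟩
    · rintro ⟨g, hg, rfl⟩
      exact ⟨(isMinimalRDF_pathGraph_cons_two_cons_zero g).2 hg, by omega, rfl⟩
  rw [CP2, CPbar2, himage, Set.ncard_image_of_injective _ hprepend]

/-- Recursion for `C_{P,2,n}`: it is `0` for `n = 1`, `1` for `n = 2`, and equals
`C_{P,2̄,n-2}` for `n > 2`. -/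
theorem CP2_recursion :
    CP2 1 = 0 ∧ CP2 2 = 1 ∧ ∀ n : ℕ, 2 < n → CP2 n = CPbar2 (n - 2) := by
  refine ⟨CP2_one, by rw [CP2_add_two 0, CPbar2_zero], fun n hn => ?_⟩
  obtain ⟨m, rfl⟩ := Nat.exists_eq_add_of_le' hn.le
  rw [Nat.add_sub_cancel, CP2_add_two]
end

section
/- There exists a constant C > 0 such that for every n ≥ 1, the number of minimal Roman dominating functions of the path P_n satisfies C_{P,n} ≤ C · 1.6852^n. -/
/-! Automaton infrastructure -/

inductive St : Type
  | st | s1 | s0n | s0s | s0c | s2p | s2d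
  deriving DecidableEq

open St

def stp (s : St) (x : Fin 3) : Option St :=
  if x = 0 then
    match s with
    | .st => some .s0n | .s1 => some .s0n | .s0n => none | .s0s => some .s0n
    | .s0c => some .s0n | .s2p => some .s0c | .s2d => some .s0s
  else if x = 1 then
    match s with
    | .st => some .s1 | .s1 => some .s1 | .s0n => none | .s0s => some .s1
    | .s0c => some .s1 | .s2p => none | .s2d => none
  else
    match s with
    | .st => some .s2p | .s1 => none | .s0n => some .s2d | .s0s => some .s2p
    | .s0c => none | .s2p => none | .s2d => some .s2p

def ostp (o : Option St) (x : Fin 3) : Option St := o.bind (fun s => stp s x)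

def runF (o : Option St) (l : List (Fin 3)) : Option St := l.foldl ostp o

@[simp] lemma runF_nil (o : Option St) : runF o [] = o := rfl

@[simp] lemma runF_cons (o : Option St) (x : Fin 3) (l : List (Fin 3)) :
    runF o (x :: l) = runF (ostp o x) l := rfl

lemma runF_concat (o : Option St) (l : List (Fin 3)) (x : Fin 3) :
    runF o (l.concat x) = ostp (runF o l) x := by
  rw [List.concat_eq_append]
  simp [runF, List.foldl_append]

/-- The weight function. -/
noncomputable def W : Option St → ℝ
  | none => 0
  | some .st => 100000
  | some .s1 => 73956
  | some .s0n => 50670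
  | some .s0s => 100000
  | some .s0c => 73956
  | some .s2p => 43887
  | some .s2d => 85386

lemma W_nonneg (o : Option St) : 0 ≤ W o := by
  rcases o with _ | s
  · simp [W]
  · cases s <;> norm_num [W]

lemma W_step (o : Option St) :
    ∑ x : Fin 3, W (ostp o x) ≤ 1.6852 * W o := by
  rcases o with _ | s
  · simp [ostp, W]
  · have h20 : ¬((2:Fin 3) = 0) := by decide
    have h21 : ¬((2:Fin 3) = 1) := by decide
    cases s <;> · simp only [Fin.sum_univ_three, ostp, stp, Option.bind_some,
                    if_pos rfl, if_neg h20, if_neg h21,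
                    (by decide : ¬((1:Fin 3) = 0)), ite_true, ite_false]
                  norm_num [W]

lemma sum_W_le (n : ℕ) (o : Option St) :
    ∑ f : Fin n → Fin 3, W (runF o (List.ofFn f)) ≤ 1.6852 ^ n * W o := by
  induction n generalizing o with
  | zero => simp [List.ofFn_zero]
  | succ n ih =>
      have key : ∑ f : Fin (n+1) → Fin 3, W (runF o (List.ofFn f))
          = ∑ p : Fin 3 × (Fin n → Fin 3), W (runF (ostp o p.1) (List.ofFn p.2)) := by
        rw [← Fintype.sum_equiv (Fin.consEquiv (fun _ => Fin 3))
          (fun p => W (runF (ostp o p.1) (List.ofFn p.2)))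
          (fun f => W (runF o (List.ofFn f)))]
        intro p
        rw [List.ofFn_succ]
        simp [Fin.consEquiv]
      rw [key, Fintype.sum_prod_type]
      calc ∑ x : Fin 3, ∑ g : Fin n → Fin 3, W (runF (ostp o x) (List.ofFn g))
          ≤ ∑ x : Fin 3, 1.6852 ^ n * W (ostp o x) := by
            apply Finset.sum_le_sum
            intro x _
            exact ih (ostp o x)
        _ = 1.6852 ^ n * ∑ x : Fin 3, W (ostp o x) := by rw [Finset.mul_sum]
        _ ≤ 1.6852 ^ n * (1.6852 * W o) := by
            apply mul_le_mul_of_nonneg_left (W_step o) (by positivity)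
        _ = 1.6852 ^ (n+1) * W o := by ring

def Acc' (o : Option St) : Prop :=
  o = some .s1 ∨ o = some .s0s ∨ o = some .s0c ∨ o = some .s2d

lemma W_acc {o : Option St} (h : Acc' o) : (73956 : ℝ) ≤ W o := by
  rcases h with h | h | h | h <;> subst h <;> norm_num [W]

/-! Run over the first `k` symbols of `F : ℕ → Fin 3`. -/
def runN (F : ℕ → Fin 3) : ℕ → Option St
  | 0 => some .st
  | k + 1 => ostp (runN F k) (F k)

lemma runF_ofFn (F : ℕ → Fin 3) (n : ℕ) :
    runF (some .st) (List.ofFn (fun i : Fin n => F i.val)) = runN F n := by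
  induction n with
  | zero => simp [runN]
  | succ n ih =>
      rw [List.ofFn_succ', List.concat_eq_append]
      simp only [runF, List.foldl_append]
      simp only [Fin.coe_castSucc, Fin.val_last]
      rw [show (List.foldl ostp (some St.st) (List.ofFn fun i : Fin n => F i.val)) = runN F n from ih]
      rfl

def StInv (F : ℕ → Fin 3) (k : ℕ) : St → Prop
  | .st => k = 0
  | .s1 => F (k-1) = 1 ∧ 1 ≤ k
  | .s0n => F (k-1) = 0 ∧ F (k-2) ≠ 2 ∧ 1 ≤ k
  | .s0s => F (k-1) = 0 ∧ F (k-2) = 2 ∧ F (k-3) = 0 ∧ F (k-4) ≠ 2 ∧ 3 ≤ k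
  | .s0c => F (k-1) = 0 ∧ F (k-2) = 2 ∧ ¬(F (k-3) = 0 ∧ F (k-4) ≠ 2 ∧ 3 ≤ k) ∧ 2 ≤ k
  | .s2p => F (k-1) = 2 ∧ ¬(F (k-2) = 0 ∧ F (k-3) ≠ 2 ∧ 2 ≤ k) ∧ 1 ≤ k
  | .s2d => F (k-1) = 2 ∧ F (k-2) = 0 ∧ F (k-3) ≠ 2 ∧ 2 ≤ k

section Key

variable {n : ℕ} {F : ℕ → Fin 3}
variable (hL0 : ∀ k, n ≤ k → F k = 0)
variable (hA1 : ∀ k, F k = 1 → F (k+1) ≠ 2)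
variable (hA2 : ∀ k, F k = 2 → F (k+1) ≠ 1)
variable (hB : ∀ k, k < n → F k = 0 → F (k-1) = 2 ∨ F (k+1) = 2)
variable (hC : ∀ k, F k = 2 →
    (F (k-1) = 0 ∧ F (k-2) ≠ 2 ∧ 1 ≤ k) ∨ (F (k+1) = 0 ∧ F (k+2) ≠ 2 ∧ k+2 ≤ n))

include hA1 hA2 hB hC in
lemma invariant : ∀ k, k ≤ n → ∃ s, runN F k = some s ∧ StInv F k s := by
  intro k
  induction k with
  | zero => intro _; exact ⟨.st, rfl, rfl⟩
  | succ k ih =>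
      intro hk1
      have hkn : k < n := hk1
      obtain ⟨s, hrun, hinv⟩ := ih (le_of_lt hkn)
      have hx : F k = 0 ∨ F k = 1 ∨ F k = 2 := by
        have : ∀ x : Fin 3, x = 0 ∨ x = 1 ∨ x = 2 := by decide
        exact this (F k)
      have e1 : k + 1 - 1 = k := by omega
      have e2 : k + 1 - 2 = k - 1 := by omega
      have e3 : k + 1 - 3 = k - 2 := by omega
      have e4 : k + 1 - 4 = k - 3 := by omega
      have hstep : runN F (k+1) = stp s (F k) := by
        simp [runN, hrun, ostp]
      cases s with
      | st =>
          -- k = 0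
          have hk0 : k = 0 := hinv
          subst hk0
          rcases hx with h0 | h1 | h2
          · exact ⟨.s0n, by rw [hstep, h0]; rfl, by
              simp only [StInv]; refine ⟨h0, ?_, le_refl 1⟩
              simp only [show 1-1 = 0 from rfl, show 1-2 = 0 from rfl] at *
              rw [h0]; decide⟩
          · exact ⟨.s1, by rw [hstep, h1]; rfl, ⟨h1, le_refl 1⟩⟩
          · refine ⟨.s2p, by rw [hstep, h2]; rfl, ⟨h2, ?_, le_refl 1⟩⟩
            rintro ⟨-, -, hge⟩; omega
      | s1 =>
          obtain ⟨hf1, hk⟩ := hinv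
          rcases hx with h0 | h1 | h2
          · refine ⟨.s0n, by rw [hstep, h0]; rfl, ?_⟩
            refine ⟨by rwa [e1], ?_, by omega⟩
            rw [e2]
            have : k - 1 + 1 = k := by omega
            rw [hf1]; decide
          · exact ⟨.s1, by rw [hstep, h1]; rfl, ⟨by rwa [e1], by omega⟩⟩
          · exfalso
            have := hA1 (k-1) hf1
            rw [show k - 1 + 1 = k by omega] at this
            exact this h2
      | s0n =>
          obtain ⟨hf0, hf2, hk⟩ := hinv
          have hBk := hB (k-1) (by omega) hf0
          rw [show k - 1 - 1 = k - 2 by omega, show k - 1 + 1 = k by omega] at hBk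
          rcases hx with h0 | h1 | h2
          · rcases hBk with h | h
            · exact absurd h hf2
            · rw [h0] at h; exact absurd h (by decide)
          · rcases hBk with h | h
            · exact absurd h hf2
            · rw [h1] at h; exact absurd h (by decide)
          · refine ⟨.s2d, by rw [hstep, h2]; rfl, ?_⟩
            exact ⟨by rwa [e1], by rwa [e2], by rwa [e3], by omega⟩
      | s0s =>
          obtain ⟨hf0, hf2, hf3, hf4, hk⟩ := hinv
          rcases hx with h0 | h1 | h2
          · refine ⟨.s0n, by rw [hstep, h0]; rfl, ?_⟩
            refine ⟨by rwa [e1], ?_, by omega⟩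
            rw [e2, hf0]; decide
          · exact ⟨.s1, by rw [hstep, h1]; rfl, ⟨by rwa [e1], by omega⟩⟩
          · refine ⟨.s2p, by rw [hstep, h2]; rfl, ?_⟩
            refine ⟨by rwa [e1], ?_, by omega⟩
            rw [e2, e3]
            rintro ⟨-, hb, -⟩
            exact hb hf2
      | s0c =>
          obtain ⟨hf0, hf2, hns, hk⟩ := hinv
          rcases hx with h0 | h1 | h2
          · refine ⟨.s0n, by rw [hstep, h0]; rfl, ?_⟩
            refine ⟨by rwa [e1], ?_, by omega⟩
            rw [e2, hf0]; decide
          · exact ⟨.s1, by rw [hstep, h1]; rfl, ⟨by rwa [e1], by omega⟩⟩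
          · exfalso
            have hCk := hC (k-2) hf2
            rw [show k - 2 - 1 = k - 3 by omega, show k - 2 - 2 = k - 4 by omega,
              show k - 2 + 1 = k - 1 by omega, show k - 2 + 2 = k by omega] at hCk
            rcases hCk with ⟨ha, hb, hc⟩ | ⟨-, hb, -⟩
            · exact hns ⟨ha, hb, by omega⟩
            · exact hb h2
      | s2p =>
          obtain ⟨hf2, hns, hk⟩ := hinv
          rcases hx with h0 | h1 | h2
          · refine ⟨.s0c, by rw [hstep, h0]; rfl, ?_⟩
            refine ⟨by rwa [e1], by rwa [e2], ?_, by omega⟩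
            rw [e3, e4]
            rintro ⟨ha, hb, hc⟩
            exact hns ⟨ha, hb, by omega⟩
          · exfalso
            have := hA2 (k-1) hf2
            rw [show k - 1 + 1 = k by omega] at this
            exact this h1
          · exfalso
            have hCk := hC (k-1) hf2
            rw [show k - 1 - 1 = k - 2 by omega, show k - 1 - 2 = k - 3 by omega,
              show k - 1 + 1 = k by omega] at hCk
            rcases hCk with ⟨ha, hb, hc⟩ | ⟨ha, -, -⟩
            · exact hns ⟨ha, hb, by omega⟩
            · rw [h2] at ha; exact absurd ha (by decide)
      | s2d =>
          obtain ⟨hf2, hf0, hf3, hk⟩ := hinv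
          rcases hx with h0 | h1 | h2
          · refine ⟨.s0s, by rw [hstep, h0]; rfl, ?_⟩
            exact ⟨by rwa [e1], by rwa [e2], by rwa [e3], by rwa [e4], by omega⟩
          · exfalso
            have := hA2 (k-1) hf2
            rw [show k - 1 + 1 = k by omega] at this
            exact this h1
          · refine ⟨.s2p, by rw [hstep, h2]; rfl, ?_⟩
            refine ⟨by rwa [e1], ?_, by omega⟩
            rw [e2]
            rintro ⟨ha, -, -⟩
            rw [hf2] at ha; exact absurd ha (by decide)

include hL0 hA1 hA2 hB hC in
lemma accepted (hn : 1 ≤ n) : Acc' (runN F n) := by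
  obtain ⟨s, hrun, hinv⟩ := invariant hA1 hA2 hB hC n (le_refl n)
  rw [hrun]
  cases s with
  | st => have h0 : n = 0 := hinv; omega
  | s1 => exact Or.inl rfl
  | s0s => exact Or.inr (Or.inl rfl)
  | s0c => exact Or.inr (Or.inr (Or.inl rfl))
  | s2d => exact Or.inr (Or.inr (Or.inr rfl))
  | s0n =>
      exfalso
      obtain ⟨hf0, hf2, hk⟩ := hinv
      have hBk := hB (n-1) (by omega) hf0
      rw [show n - 1 - 1 = n - 2 by omega, show n - 1 + 1 = n by omega] at hBk
      rcases hBk with h | h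
      · exact hf2 h
      · rw [hL0 n (le_refl n)] at h; exact absurd h (by decide)
  | s2p =>
      exfalso
      obtain ⟨hf2, hns, hk⟩ := hinv
      have hCk := hC (n-1) hf2
      rw [show n - 1 - 1 = n - 2 by omega, show n - 1 - 2 = n - 3 by omega] at hCk
      rcases hCk with ⟨ha, hb, hc⟩ | ⟨-, -, hc⟩
      · exact hns ⟨ha, hb, by omega⟩
      · omega

end Key

lemma lemA {V : Type*} {G : SimpleGraph V} {f : V → Fin 3} (h : IsMinimalRDF G f)
    {v u : V} (hadj : G.Adj v u) (hv : f v = 1) : f u ≠ 2 := by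
  classical
  intro hu
  set g := Function.update f v 0 with hg
  have hne : u ≠ v := fun e => by rw [e, hv] at hu; exact absurd hu (by decide)
  have hrdf : IsRDF G g := by
    intro w hw
    by_cases hwv : w = v
    · subst hwv
      exact ⟨u, hadj, by rw [hg, Function.update_of_ne hne]; exact hu⟩
    · have hfw : f w = 0 := by rwa [hg, Function.update_of_ne hwv] at hw
      obtain ⟨j, hja, hj2⟩ := h.1 w hfw
      have hjv : j ≠ v := fun e => by rw [e, hv] at hj2; exact absurd hj2 (by decide)
      exact ⟨j, hja, by rw [hg, Function.update_of_ne hjv]; exact hj2⟩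
  have hle : g ≤ f := by
    intro i
    by_cases hiv : i = v
    · subst hiv; rw [hg, Function.update_self]; exact Fin.zero_le _
    · rw [hg, Function.update_of_ne hiv]
  have heq := h.2 g hrdf hle
  have hvv : g v = f v := congrFun heq v
  rw [hg, Function.update_self, hv] at hvv
  exact absurd hvv (by decide)

lemma lemC {V : Type*} {G : SimpleGraph V} {f : V → Fin 3} (h : IsMinimalRDF G f)
    {v : V} (hv : f v = 2) :
    ∃ u, G.Adj v u ∧ f u = 0 ∧ ∀ w, G.Adj u w → w ≠ v → f w ≠ 2 := by
  classical
  by_contra hcon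
  push_neg at hcon
  set g := Function.update f v 1 with hg
  have hrdf : IsRDF G g := by
    intro w hw
    have hwv : w ≠ v := by
      intro e; rw [e, hg, Function.update_self] at hw; exact absurd hw (by decide)
    have hfw : f w = 0 := by rwa [hg, Function.update_of_ne hwv] at hw
    obtain ⟨j, hja, hj2⟩ := h.1 w hfw
    by_cases hjv : j = v
    · subst hjv
      obtain ⟨w', hw'a, hw'v, hw'2⟩ := hcon w hja.symm hfw
      exact ⟨w', hw'a, by rw [hg, Function.update_of_ne hw'v]; exact hw'2⟩
    · exact ⟨j, hja, by rw [hg, Function.update_of_ne hjv]; exact hj2⟩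
  have hle : g ≤ f := by
    intro i
    by_cases hiv : i = v
    · subst hiv; rw [hg, Function.update_self, hv]; exact (by decide : (1:Fin 3) ≤ (2:Fin 3))
    · rw [hg, Function.update_of_ne hiv]
  have heq := h.2 g hrdf hle
  have hvv : g v = f v := congrFun heq v
  rw [hg, Function.update_self, hv] at hvv
  exact absurd hvv (by decide)


lemma minimal_accepted {n : ℕ} (hn : 1 ≤ n) {f : Fin n → Fin 3}
    (h : IsMinimalRDF (SimpleGraph.pathGraph n) f) :
    Acc' (runF (some St.st) (List.ofFn f)) := by
  classical
  set F : ℕ → Fin 3 := fun k => if hk : k < n then f ⟨k, hk⟩ else 0 with hF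
  have hFf : ∀ i : Fin n, F i.val = f i := fun i => by simp [hF, i.isLt]
  have hofn : List.ofFn f = List.ofFn (fun i : Fin n => F i.val) := by
    congr 1; funext i; rw [hFf]
  rw [hofn, runF_ofFn]
  have hlt : ∀ k, F k ≠ 0 → k < n := by
    intro k hk
    by_contra hge
    exact hk (by simp [hF, fun hlt' => hge hlt'])
  have hL0 : ∀ k, n ≤ k → F k = 0 := by
    intro k hk
    have : ¬ k < n := by omega
    simp [hF, this]
  have hA1 : ∀ k, F k = 1 → F (k+1) ≠ 2 := by
    intro k h1 h2
    have hk : k < n := hlt k (by rw [h1]; decide)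
    have hk1 : k + 1 < n := hlt (k+1) (by rw [h2]; decide)
    have hadj : (SimpleGraph.pathGraph n).Adj ⟨k, hk⟩ ⟨k+1, hk1⟩ :=
      SimpleGraph.pathGraph_adj.2 (Or.inl rfl)
    exact lemA h hadj (by rw [← hFf ⟨k, hk⟩]; exact h1) (by rw [← hFf ⟨k+1, hk1⟩]; exact h2)
  have hA2 : ∀ k, F k = 2 → F (k+1) ≠ 1 := by
    intro k h2 h1
    have hk : k < n := hlt k (by rw [h2]; decide)
    have hk1 : k + 1 < n := hlt (k+1) (by rw [h1]; decide)
    have hadj : (SimpleGraph.pathGraph n).Adj ⟨k+1, hk1⟩ ⟨k, hk⟩ :=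
      SimpleGraph.pathGraph_adj.2 (Or.inr rfl)
    exact lemA h hadj (by rw [← hFf ⟨k+1, hk1⟩]; exact h1) (by rw [← hFf ⟨k, hk⟩]; exact h2)
  have hB : ∀ k, k < n → F k = 0 → F (k-1) = 2 ∨ F (k+1) = 2 := by
    intro k hk h0
    obtain ⟨u, hadj, hu2⟩ := h.1 ⟨k, hk⟩ (by rw [← hFf ⟨k, hk⟩]; exact h0)
    rcases SimpleGraph.pathGraph_adj.1 hadj with he | he
    · right
      have he' : k + 1 = u.val := he
      rw [show k + 1 = u.val from he', hFf]
      exact hu2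
    · left
      have he' : u.val + 1 = k := he
      rw [show k - 1 = u.val by omega, hFf]
      exact hu2
  have hC : ∀ k, F k = 2 →
      (F (k-1) = 0 ∧ F (k-2) ≠ 2 ∧ 1 ≤ k) ∨ (F (k+1) = 0 ∧ F (k+2) ≠ 2 ∧ k+2 ≤ n) := by
    intro k h2
    have hk : k < n := hlt k (by rw [h2]; decide)
    obtain ⟨u, hadj, hu0, hpriv⟩ := lemC h (v := ⟨k, hk⟩) (by rw [← hFf ⟨k, hk⟩]; exact h2)
    have hultn := u.isLt
    rcases SimpleGraph.pathGraph_adj.1 hadj with he | he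
    · -- k + 1 = u.val
      right
      have he' : k + 1 = u.val := he
      have hk1 : k + 1 < n := by omega
      refine ⟨by rw [show k + 1 = u.val from he', hFf]; exact hu0, ?_, by omega⟩
      intro hc
      have hk2 : k + 2 < n := hlt _ (by rw [hc]; decide)
      have hw : (SimpleGraph.pathGraph n).Adj u ⟨k+2, hk2⟩ :=
        SimpleGraph.pathGraph_adj.2 (Or.inl (show u.val + 1 = k + 2 by omega))
      have hne : (⟨k+2, hk2⟩ : Fin n) ≠ ⟨k, hk⟩ := by
        intro e
        have h' : k + 2 = k := congrArg Fin.val e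
        omega
      exact hpriv _ hw hne (by rw [← hFf ⟨k+2, hk2⟩]; exact hc)
    · -- u.val + 1 = k
      left
      have he' : u.val + 1 = k := he
      refine ⟨by rw [show k - 1 = u.val by omega, hFf]; exact hu0, ?_, by omega⟩
      intro hc
      have hk2 : k - 2 < n := hlt _ (by rw [hc]; decide)
      by_cases h2k : 2 ≤ k
      · have hw : (SimpleGraph.pathGraph n).Adj u ⟨k-2, hk2⟩ :=
          SimpleGraph.pathGraph_adj.2 (Or.inr (show (k-2) + 1 = u.val by omega))
        have hne : (⟨k-2, hk2⟩ : Fin n) ≠ ⟨k, hk⟩ := by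
          intro e
          have h' : k - 2 = k := congrArg Fin.val e
          omega
        exact hpriv _ hw hne (by rw [← hFf ⟨k-2, hk2⟩]; exact hc)
      · have hk1 : k = 1 := by omega
        have huv : u.val = 0 := by omega
        rw [show k - 2 = u.val by omega, hFf, hu0] at hc
        exact absurd hc (by decide)
  exact accepted hL0 hA1 hA2 hB hC hn

/-- The number of minimal Roman dominating functions of a path grows as `O(1.6852ⁿ)`. -/
theorem CP_upper_bound :
    ∃ C : ℝ, 0 < C ∧ ∀ n : ℕ, 1 ≤ n → (CP n : ℝ) ≤ C * 1.6852 ^ n := by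
  classical
  refine ⟨2, by norm_num, ?_⟩
  intro n hn
  set T : Set (Fin n → Fin 3) := {f | Acc' (runF (some St.st) (List.ofFn f))} with hT
  have hfinT : T.Finite := Set.toFinite _
  have hsub : {f : Fin n → Fin 3 | IsMinimalRDF (SimpleGraph.pathGraph n) f} ⊆ T :=
    fun f hf => minimal_accepted hn hf
  have h1 : CP n ≤ hfinT.toFinset.card := by
    simp only [CP, numMinRDF]
    calc ({f : Fin n → Fin 3 | IsMinimalRDF (SimpleGraph.pathGraph n) f}).ncard
        ≤ T.ncard := Set.ncard_le_ncard hsub hfinT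
      _ = hfinT.toFinset.card := Set.ncard_eq_toFinset_card _ hfinT
  have h2 : (hfinT.toFinset.card : ℝ) * 73956 ≤
      ∑ f : Fin n → Fin 3, W (runF (some St.st) (List.ofFn f)) := by
    have hstep := Finset.card_nsmul_le_sum hfinT.toFinset
      (fun f => W (runF (some St.st) (List.ofFn f))) (73956 : ℝ)
      (fun f hf => W_acc (by have := hfinT.mem_toFinset.1 hf; exact this))
    rw [nsmul_eq_mul] at hstep
    refine le_trans hstep ?_
    exact Finset.sum_le_sum_of_subset_of_nonneg (Finset.subset_univ _)
      (fun f _ _ => W_nonneg _)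
  have h3 := sum_W_le n (some St.st)
  have hWst : W (some St.st) = 100000 := rfl
  rw [hWst] at h3
  have hp : (0:ℝ) ≤ 1.6852 ^ n := by positivity
  have hcard : (CP n : ℝ) ≤ (hfinT.toFinset.card : ℝ) := by exact_mod_cast h1
  nlinarith [h2, h3, hcard, hp]
end

section
/- For every k ≥ 1, the graph consisting of the disjoint union of k copies of P₂ (i.e., a perfect matching on 2k vertices) has exactly 3^k = (√3)^{2k} minimal Roman dominating functions. -/
/-- The disjoint union of `k` copies of `P₂`, i.e. a perfect matching on `2k` vertices:
`(i, a)` and `(j, b)` are adjacent iff `i = j` and `a ≠ b`. -/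
def perfectMatchingGraph (k : ℕ) : SimpleGraph (Fin k × Fin 2) :=
  SimpleGraph.fromRel (fun x y => x.1 = y.1)

lemma fin2_ne_zero {a : Fin 2} (h : a ≠ 0) : a = 1 := by fin_cases a <;> simp_all

lemma pmg_adj {k : ℕ} (x y : Fin k × Fin 2) :
    (perfectMatchingGraph k).Adj x y ↔ x.1 = y.1 ∧ x.2 ≠ y.2 := by
  rw [perfectMatchingGraph, SimpleGraph.fromRel_adj]
  simp [Prod.ext_iff]
  tauto

/-- The allowed pairs on each edge. -/
def goodPairs : Finset (Fin 3 × Fin 3) := {(0,2),(2,0),(1,1)}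

/-- Modification lemma: replace the values on component `i` by `(x, y)`. -/
lemma modifyRDF {k : ℕ} (f : (Fin k × Fin 2) → Fin 3)
    (hf : IsMinimalRDF (perfectMatchingGraph k) f) (i : Fin k) (x y : Fin 3)
    (hx : x ≤ f (i,0)) (hy : y ≤ f (i,1))
    (hxy : x = 0 → y = 2) (hyx : y = 0 → x = 2) :
    x = f (i,0) ∧ y = f (i,1) := by
  set g : (Fin k × Fin 2) → Fin 3 :=
    fun p => if p.1 = i then (if p.2 = 0 then x else y) else f p with hg
  have hgle : g ≤ f := by
    intro p
    by_cases h1 : p.1 = i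
    · by_cases h2 : p.2 = 0
      · have hp : p = (i, 0) := Prod.ext h1 h2
        simp [hg, h1, h2, hp, hx]
      · have hp : p = (i, 1) := Prod.ext h1 (fin2_ne_zero h2)
        simp [hg, h1, h2, hp, hy]
    · simp [hg, h1]
  have hgrdf : IsRDF (perfectMatchingGraph k) g := by
    intro v hv
    by_cases h1 : v.1 = i
    · by_cases h2 : v.2 = 0
      · have hvv : v = (i, 0) := Prod.ext h1 h2
        have hx0 : x = 0 := by simpa [hg, h1, h2] using hv
        refine ⟨(i, 1), ?_, ?_⟩
        · rw [hvv, pmg_adj]; simp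
        · simp [hg, hxy hx0]
      · have hvv : v = (i, 1) := Prod.ext h1 (fin2_ne_zero h2)
        have hy0 : y = 0 := by simpa [hg, h1, h2] using hv
        refine ⟨(i, 0), ?_, ?_⟩
        · rw [hvv, pmg_adj]; simp
        · simp [hg, hyx hy0]
    · have hv' : f v = 0 := by simpa [hg, h1] using hv
      obtain ⟨u, hadj, hu⟩ := hf.1 v hv'
      have hu1 : u.1 ≠ i := by
        rw [pmg_adj] at hadj; rw [← hadj.1]; exact h1
      exact ⟨u, hadj, by simpa [hg, hu1] using hu⟩
  have := hf.2 g hgrdf hgle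
  constructor
  · have := congrFun this (i, 0); simpa [hg] using this
  · have := congrFun this (i, 1); simpa [hg] using this

lemma fin3_cases (a : Fin 3) : a = 0 ∨ a = 1 ∨ a = 2 := by fin_cases a <;> simp
lemma fin2_cases (a : Fin 2) : a = 0 ∨ a = 1 := by fin_cases a <;> simp

lemma char_min {k : ℕ} (f : (Fin k × Fin 2) → Fin 3) :
    IsMinimalRDF (perfectMatchingGraph k) f ↔
      ∀ i : Fin k, (f (i,0), f (i,1)) ∈ goodPairs := by
  constructor
  · intro hf i
    have h0 : f (i,0) = 0 → f (i,1) = 2 := by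
      intro h
      obtain ⟨u, hadj, hu⟩ := hf.1 (i,0) h
      rw [pmg_adj] at hadj
      have : u = (i,1) := Prod.ext hadj.1.symm (fin2_ne_zero (Ne.symm hadj.2))
      rwa [this] at hu
    have h1 : f (i,1) = 0 → f (i,0) = 2 := by
      intro h
      obtain ⟨u, hadj, hu⟩ := hf.1 (i,1) h
      rw [pmg_adj] at hadj
      have hu2 : u.2 = 0 := by
        by_contra hc
        exact hadj.2 (fin2_ne_zero hc).symm
      have : u = (i,0) := Prod.ext hadj.1.symm hu2
      rwa [this] at hu
    rcases fin3_cases (f (i,0)) with ha | ha | ha <;>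
      rcases fin3_cases (f (i,1)) with hb | hb | hb
    · rw [h0 ha] at hb; exact absurd hb (by decide)
    · rw [h0 ha] at hb; exact absurd hb (by decide)
    · rw [ha, hb]; decide
    · rw [h1 hb] at ha; exact absurd ha (by decide)
    · rw [ha, hb]; decide
    · have := modifyRDF f hf i 0 2 (Fin.zero_le _) (by rw [hb]) (fun _ => rfl) (by decide)
      rw [ha] at this; exact absurd this.1 (by decide)
    · rw [ha, hb]; decide
    · have := modifyRDF f hf i 2 0 (by rw [ha]) (Fin.zero_le _) (by decide) (fun _ => rfl)
      rw [hb] at this; exact absurd this.2 (by decide)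
    · have := modifyRDF f hf i 0 2 (Fin.zero_le _) (by rw [hb]) (fun _ => rfl) (by decide)
      rw [ha] at this; exact absurd this.1 (by decide)
  · intro hT
    constructor
    · intro v hv
      obtain ⟨i, a⟩ := v
      have h := hT i
      simp only [goodPairs, Finset.mem_insert, Finset.mem_singleton, Prod.mk.injEq] at h
      rcases h with ⟨h1, h2⟩ | ⟨h1, h2⟩ | ⟨h1, h2⟩
      · rcases fin2_cases a with rfl | rfl
        · exact ⟨(i,1), by rw [pmg_adj]; refine ⟨rfl, by norm_num⟩, h2⟩
        · rw [h2] at hv; exact absurd hv (by decide)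
      · rcases fin2_cases a with rfl | rfl
        · rw [h1] at hv; exact absurd hv (by decide)
        · exact ⟨(i,0), by rw [pmg_adj]; refine ⟨rfl, by norm_num⟩, h1⟩
      · rcases fin2_cases a with rfl | rfl
        · rw [h1] at hv; exact absurd hv (by decide)
        · rw [h2] at hv; exact absurd hv (by decide)
    · intro g hg hle
      funext p
      obtain ⟨i, a⟩ := p
      have h := hT i
      simp only [goodPairs, Finset.mem_insert, Finset.mem_singleton, Prod.mk.injEq] at h
      rcases h with ⟨h1, h2⟩ | ⟨h1, h2⟩ | ⟨h1, h2⟩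
      · rcases fin2_cases a with rfl | rfl
        · have := hle (i, 0); rw [h1] at this
          rw [Fin.le_zero_iff.mp this, h1]
        · have hg0 : g (i, 0) = 0 := by
            have := hle (i, 0); rw [h1] at this
            exact Fin.le_zero_iff.mp this
          obtain ⟨u, hadj, hu⟩ := hg (i,0) hg0
          rw [pmg_adj] at hadj
          have : u = (i,1) := Prod.ext hadj.1.symm (fin2_ne_zero (Ne.symm hadj.2))
          rw [this] at hu
          rw [hu, h2]
      · rcases fin2_cases a with rfl | rfl
        · have hg1 : g (i, 1) = 0 := by
            have := hle (i, 1); rw [h2] at this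
            exact Fin.le_zero_iff.mp this
          obtain ⟨u, hadj, hu⟩ := hg (i,1) hg1
          rw [pmg_adj] at hadj
          have hu2 : u.2 = 0 := by
            by_contra hc
            exact hadj.2 (fin2_ne_zero hc).symm
          have : u = (i,0) := Prod.ext hadj.1.symm hu2
          rw [this] at hu
          rw [hu, h1]
        · have := hle (i, 1); rw [h2] at this
          rw [Fin.le_zero_iff.mp this, h2]
      · have key : ∀ b : Fin 2, g (i, b) ≠ 0 := by
          intro b hb
          obtain ⟨u, hadj, hu⟩ := hg (i, b) hb
          rw [pmg_adj] at hadj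
          have hu1 : u.1 = i := hadj.1.symm
          have hle' : g u ≤ f u := hle u
          have hfu : f u = 1 := by
            have hue : u = (i, u.2) := Prod.ext hu1 rfl
            rw [hue]
            rcases fin2_cases u.2 with h | h <;> rw [h]
            · exact h1
            · exact h2
          rw [hu, hfu] at hle'
          exact absurd hle' (by decide)
        have hle' : g (i, a) ≤ f (i, a) := hle (i, a)
        have hfa : f (i, a) = 1 := by
          rcases fin2_cases a with rfl | rfl
          · exact h1
          · exact h2
        rw [hfa] at hle' ⊢
        rcases fin3_cases (g (i, a)) with hc | hc | hc
        · exact absurd hc (key a)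
        · exact hc
        · rw [hc] at hle'; exact absurd hle' (by decide)

/-- The equivalence with functions into goodPairs. -/
def pairEquiv (k : ℕ) :
    {f : (Fin k × Fin 2) → Fin 3 // ∀ i : Fin k, (f (i,0), f (i,1)) ∈ goodPairs} ≃
      (Fin k → goodPairs) where
  toFun f i := ⟨(f.1 (i,0), f.1 (i,1)), f.2 i⟩
  invFun h := ⟨fun p => if p.2 = 0 then ((h p.1 : Fin 3 × Fin 3)).1 else ((h p.1 : Fin 3 × Fin 3)).2,
    fun i => by simpa using (h i).2⟩
  left_inv f := by
    apply Subtype.ext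
    funext p
    obtain ⟨i, a⟩ := p
    fin_cases a <;> simp
  right_inv h := by
    funext i
    apply Subtype.ext
    simp

/-- The disjoint union of `k` copies of `P₂` has exactly `3^k = (√3)^(2k)` minimal Roman
dominating functions. -/
theorem matching_count (k : ℕ) (hk : 1 ≤ k) :
    numMinRDF (perfectMatchingGraph k) = 3 ^ k ∧
    ((3 : ℝ) ^ k = Real.sqrt 3 ^ (2 * k)) := by
  constructor
  · have hset : {f : (Fin k × Fin 2) → Fin 3 | IsMinimalRDF (perfectMatchingGraph k) f} =
        {f | ∀ i : Fin k, (f (i,0), f (i,1)) ∈ goodPairs} := by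
      ext f; exact char_min f
    rw [numMinRDF, hset, ← Nat.card_coe_set_eq]
    have : Nat.card {f : (Fin k × Fin 2) → Fin 3 | ∀ i : Fin k, (f (i,0), f (i,1)) ∈ goodPairs}
        = Nat.card (Fin k → goodPairs) := Nat.card_congr (pairEquiv k)
    rw [this, Nat.card_fun, Nat.card_eq_fintype_card]
    simp [goodPairs]
    rfl
  · rw [pow_mul, Real.sq_sqrt (by norm_num : (3:ℝ) ≥ 0)]
end

section
/- Let ω = 0.57. For every natural number n ≥ 1, the inequality (√3)^{n+ω} − (√3)^{ω·n} − n ≥ 0 holds; equivalently, n·(√3)^{−(n+ω)} + (√3)^{−(ω + (1−ω)·n)} ≤ 1, which means the branching vector consisting of n entries equal to ω+n together with one entry equal to ω+(1−ω)·n has branching number at most √3. -/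
open Real

lemma rpow_rat_pow (a : ℕ) (b : ℕ) (hb : b ≠ 0) :
    ((3:ℝ) ^ (((a:ℕ):ℝ)/((b:ℕ):ℝ))) ^ (b:ℕ) = (3:ℝ) ^ (a:ℕ) := by
  rw [← Real.rpow_natCast ((3:ℝ) ^ (((a:ℕ):ℝ)/((b:ℕ):ℝ))) b, ← Real.rpow_mul (by norm_num : (0:ℝ) ≤ 3)]
  rw [div_mul_cancel₀]
  · exact Real.rpow_natCast 3 a
  · exact_mod_cast hb

lemma L1 : (2.368864:ℝ) ≤ (3:ℝ) ^ (0.785:ℝ) := by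
  rw [show (0.785:ℝ) = ((157:ℕ):ℝ)/((200:ℕ):ℝ) by norm_num]
  refine le_of_pow_le_pow_left₀ (n := 200) (by norm_num) (Real.rpow_nonneg (by norm_num) _) ?_
  rw [rpow_rat_pow 157 200 (by norm_num)]
  norm_num

lemma L2 : (3:ℝ) ^ (0.285:ℝ) ≤ 1.367665 := by
  rw [show (0.285:ℝ) = ((57:ℕ):ℝ)/((200:ℕ):ℝ) by norm_num]
  refine le_of_pow_le_pow_left₀ (n := 200) (by norm_num) (by norm_num) ?_
  rw [rpow_rat_pow 57 200 (by norm_num)]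
  norm_num

lemma L3 : (1.367664:ℝ) ≤ (3:ℝ) ^ (0.285:ℝ) := by
  rw [show (0.285:ℝ) = ((57:ℕ):ℝ)/((200:ℕ):ℝ) by norm_num]
  refine le_of_pow_le_pow_left₀ (n := 200) (by norm_num) (Real.rpow_nonneg (by norm_num) _) ?_
  rw [rpow_rat_pow 57 200 (by norm_num)]
  norm_num

lemma sqrt3_lb : (1.732:ℝ) ≤ Real.sqrt 3 := by
  have h := Real.sq_sqrt (by norm_num : (0:ℝ) ≤ 3)
  nlinarith [Real.sqrt_nonneg 3]

lemma sqrt3_pos : (0:ℝ) < Real.sqrt 3 := by linarith [sqrt3_lb]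

lemma hconv (a : ℝ) : Real.sqrt 3 ^ a = (3:ℝ) ^ (a/2) := by
  rw [Real.sqrt_eq_rpow, ← Real.rpow_mul (by norm_num : (0:ℝ) ≤ 3)]
  rw [show 1/2 * a = a/2 by ring]

lemma key (n : ℕ) (hn : 1 ≤ n) :
    (n : ℝ) + Real.sqrt 3 ^ ((0.57:ℝ) * n) ≤ Real.sqrt 3 ^ ((n:ℝ) + 0.57) := by
  induction n, hn using Nat.le_induction with
  | base =>
      rw [show ((1:ℕ):ℝ) + 0.57 = (1.57:ℝ) by norm_num,
          show (0.57:ℝ) * ((1:ℕ):ℝ) = (0.57:ℝ) by norm_num,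
          hconv, hconv, show (1.57:ℝ)/2 = 0.785 by norm_num,
          show (0.57:ℝ)/2 = 0.285 by norm_num]
      push_cast
      linarith [L1, L2]
  | succ n hn ih =>
      have hs := sqrt3_pos
      have h1 : Real.sqrt 3 ^ (((n+1:ℕ):ℝ) + 0.57)
          = Real.sqrt 3 * Real.sqrt 3 ^ ((n:ℝ) + 0.57) := by
        push_cast
        rw [show (n:ℝ) + 1 + 0.57 = ((n:ℝ) + 0.57) + 1 by ring,
            Real.rpow_add hs, Real.rpow_one]
        ring
      have h2 : Real.sqrt 3 ^ ((0.57:ℝ) * ((n+1:ℕ):ℝ))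
          = Real.sqrt 3 ^ ((0.57:ℝ) * n) * Real.sqrt 3 ^ (0.57:ℝ) := by
        push_cast
        rw [show (0.57:ℝ) * ((n:ℝ) + 1) = 0.57 * n + 0.57 by ring, Real.rpow_add hs]
      have hA : (1.367664:ℝ) ≤ Real.sqrt 3 ^ ((0.57:ℝ) * n) := by
        have hb : (1.367664:ℝ) ≤ Real.sqrt 3 ^ (0.57:ℝ) := by
          rw [hconv, show (0.57:ℝ)/2 = 0.285 by norm_num]; exact L3
        have hle : Real.sqrt 3 ^ (0.57:ℝ) ≤ Real.sqrt 3 ^ ((0.57:ℝ) * n) := by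
          apply Real.rpow_le_rpow_of_exponent_le (by linarith [sqrt3_lb])
          have h1n : (1:ℝ) ≤ (n:ℝ) := by exact_mod_cast hn
          nlinarith
        linarith
      have ht : Real.sqrt 3 ^ (0.57:ℝ) ≤ 1.367665 := by
        rw [hconv, show (0.57:ℝ)/2 = 0.285 by norm_num]; exact L2
      have hslb := sqrt3_lb
      have hn1 : (1:ℝ) ≤ (n:ℝ) := by exact_mod_cast hn
      rw [h1, h2]
      push_cast
      set A := Real.sqrt 3 ^ ((0.57:ℝ) * n) with hAdef
      set s := Real.sqrt 3 with hsdef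
      have hmono : s * ((n:ℝ) + A) ≤ s * s ^ ((n:ℝ) + 0.57) :=
        mul_le_mul_of_nonneg_left ih (le_of_lt hs)
      nlinarith [mul_nonneg (by linarith : (0:ℝ) ≤ A - 1.367664)
          (by linarith : (0:ℝ) ≤ s - s ^ (0.57:ℝ)),
        mul_nonneg (by linarith : (0:ℝ) ≤ s - 1.732) (by linarith : (0:ℝ) ≤ (n:ℝ) - 1)]

/-- With `ω = 0.57`, for every `n ≥ 1` we have `(√3)^(n+ω) - (√3)^(ω·n) - n ≥ 0`;
equivalently, `n·(√3)^(-(n+ω)) + (√3)^(-(ω+(1-ω)·n)) ≤ 1`, i.e. the branching vector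
with `n` entries `ω + n` and one entry `ω + (1-ω)·n` has branching number at most `√3`. -/
theorem branching_number_le_sqrt_three (n : ℕ) (hn : 1 ≤ n) :
    Real.sqrt 3 ^ ((n : ℝ) + 0.57) - Real.sqrt 3 ^ ((0.57 : ℝ) * n) - n ≥ 0 ∧
    (n : ℝ) * Real.sqrt 3 ^ (-((n : ℝ) + 0.57)) +
      Real.sqrt 3 ^ (-((0.57 : ℝ) + (1 - 0.57) * n)) ≤ 1 := by
  have hkey := key n hn
  have hp : 0 < Real.sqrt 3 ^ ((n:ℝ) + 0.57) := Real.rpow_pos_of_pos sqrt3_pos _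
  constructor
  · linarith
  · have he : Real.sqrt 3 ^ (-((0.57:ℝ) + (1 - 0.57) * n))
        = Real.sqrt 3 ^ ((0.57:ℝ) * n) * Real.sqrt 3 ^ (-((n:ℝ) + 0.57)) := by
      rw [← Real.rpow_add sqrt3_pos]
      congr 1
      ring
    rw [he, Real.rpow_neg (Real.sqrt_nonneg 3)]
    have heq : (n:ℝ) * (Real.sqrt 3 ^ ((n:ℝ) + 0.57))⁻¹
        + Real.sqrt 3 ^ ((0.57:ℝ) * n) * (Real.sqrt 3 ^ ((n:ℝ) + 0.57))⁻¹
        = ((n:ℝ) + Real.sqrt 3 ^ ((0.57:ℝ) * n)) / Real.sqrt 3 ^ ((n:ℝ) + 0.57) := by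
      field_simp
    rw [heq, div_le_one hp]
    exact hkey
end

section
/- Let α be the unique real root of x³ = x² + 1 (so 1.46 < α < 1.47). There exists a polynomial p such that every split graph of order n has at most p(n) · α^n minimal Roman dominating functions. -/
/-! Let `T` be the set of vertices on which a minimal rdf `f` takes the value `2`. Then `f` is
determined by `T`, and every `v ∈ T` has a private neighbour outside `T`: a vertex whose only
neighbour in `T` is `v`. In a split graph `C ∪ I`, unless `T` is a single vertex of the clique,
either `T ⊆ C` with all private neighbours in `I`, or `T ⊆ I` with all private neighbours in `C`.

So everything reduces to counting the sets `S ⊆ X` all of whose elements have a private neighbour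
in `Y`, for a relation between `X` and `Y`. Branching on `v ∈ X`: leaving `v` out of `S` removes
`v`; putting it in removes `v` together with its neighbours in `Y`, which are of no use to the rest
of `S`. When `v` has a single neighbour `u`, either `u` has another neighbour `x`, which then cannot
lie in `S`, or `u` sees only `v` and may be deleted at the price of a factor `2 ≤ α²`. With
`m = |X| + |Y|`, every branching thus obeys `c(m) ≤ c(m - 1) + c(m - 3)`, whose growth rate is the
root `α` of `x³ = x² + 1`. -/

open Finset

section RootBounds

variable {α : ℝ}

lemma one_lt_of_pow_three_eq (hα : α ^ 3 = α ^ 2 + 1) : 1 < α := by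
  by_contra! h
  nlinarith [mul_nonneg (sq_nonneg α) (sub_nonneg.2 h)]

lemma two_le_sq_of_pow_three_eq (hα : α ^ 3 = α ^ 2 + 1) : 2 ≤ α ^ 2 := by
  have h1 := one_lt_of_pow_three_eq hα
  have h32 : α ≤ 3 / 2 := by
    by_contra! h
    nlinarith [mul_lt_mul'' (show 9 / 4 < α ^ 2 by nlinarith) (show 1 / 2 < α - 1 by linarith)
      (by norm_num) (by norm_num)]
  nlinarith

lemma add_le_of_pow_three_mul_le (hα : α ^ 3 = α ^ 2 + 1) {a b c : ℝ} (ha : α ^ 3 * a ≤ c)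
    (hb : α * b ≤ c) : a + b ≤ c := by
  have hpos : 0 < α ^ 3 := pow_pos (zero_lt_one.trans (one_lt_of_pow_three_eq hα)) 3
  refine le_of_mul_le_mul_left ?_ hpos
  calc α ^ 3 * (a + b) = α ^ 3 * a + α ^ 2 * (α * b) := by ring
    _ ≤ c + α ^ 2 * c := by gcongr
    _ = α ^ 3 * c := by rw [hα]; ring

lemma add_le_of_sq_mul_le (h2 : 2 ≤ α ^ 2) {a b c : ℝ} (ha : α ^ 2 * a ≤ c)
    (hb : α ^ 2 * b ≤ c) (hc : 0 ≤ c) : a + b ≤ c := by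
  refine le_of_mul_le_mul_left ?_ (zero_lt_two.trans_le h2)
  nlinarith

lemma pow_mul_card_le {β : Type*} {𝒜 ℬ : Finset β} {a k m : ℕ} (hα : 1 ≤ α) (h𝒜 : 𝒜 ⊆ ℬ)
    (hℬ : (#ℬ : ℝ) ≤ α ^ a) (h : a + k ≤ m) : α ^ k * #𝒜 ≤ α ^ m :=
  calc α ^ k * #𝒜 ≤ α ^ k * α ^ a := by gcongr; exact (Nat.cast_le.2 (card_le_card h𝒜)).trans hℬ
    _ = α ^ (a + k) := by ring
    _ ≤ α ^ m := pow_le_pow_right₀ hα h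

end RootBounds

section PrivateNeighbours

variable {ι κ : Type*} {R : ι → κ → Prop} {X S T : Finset ι} {Y : Finset κ} {v x : ι} {u : κ}

def HasPrivateNbrs (R : ι → κ → Prop) (Y : Finset κ) (S : Finset ι) : Prop :=
  ∀ v ∈ S, ∃ u ∈ Y, R v u ∧ ∀ w ∈ S, R w u → w = v

open Classical in
noncomputable def privateSets (R : ι → κ → Prop) (X : Finset ι) (Y : Finset κ) :
    Finset (Finset ι) :=
  {S ∈ X.powerset | HasPrivateNbrs R Y S}

lemma mem_privateSets : S ∈ privateSets R X Y ↔ S ⊆ X ∧ HasPrivateNbrs R Y S := by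
  simp [privateSets]

lemma HasPrivateNbrs.subset (h : HasPrivateNbrs R Y S) (hTS : T ⊆ S) : HasPrivateNbrs R Y T := by
  intro v hv
  obtain ⟨u, hu, hvu, huniq⟩ := h v (hTS hv)
  exact ⟨u, hu, hvu, fun w hw => huniq w (hTS hw)⟩

lemma privateSets_empty_left : privateSets R ∅ Y = {∅} := by
  ext S
  simp only [mem_privateSets, subset_empty, mem_singleton, and_iff_left_iff_imp]
  rintro rfl v hv
  simp at hv

lemma HasPrivateNbrs.erase_of_forall_not [DecidableEq κ] (h : HasPrivateNbrs R Y S)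
    (hu : ∀ w ∈ S, ¬R w u) : HasPrivateNbrs R (Y.erase u) S := by
  intro v hv
  obtain ⟨u', hu', hvu', huniq⟩ := h v hv
  exact ⟨u', mem_erase.2 ⟨by rintro rfl; exact hu v hv hvu', hu'⟩, hvu', huniq⟩

lemma HasPrivateNbrs.of_insert [DecidableEq ι] [DecidableRel R]
    (h : HasPrivateNbrs R Y (insert v S)) (hv : v ∉ S) :
    HasPrivateNbrs R (Y.filter (¬R v ·)) S := by
  intro w hw
  obtain ⟨u, hu, hwu, huniq⟩ := h w (mem_insert_of_mem hw)
  refine ⟨u, mem_filter.2 ⟨hu, fun hvu => hv ?_⟩, hwu,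
    fun w' hw' => huniq w' (mem_insert_of_mem hw')⟩
  rwa [huniq v (mem_insert_self v S) hvu]

variable [DecidableEq ι]

lemma nonMemberSubfamily_privateSets_subset :
    (privateSets R X Y).nonMemberSubfamily v ⊆ privateSets R (X.erase v) Y := by
  intro S hS
  rw [mem_nonMemberSubfamily, mem_privateSets] at hS
  exact mem_privateSets.2 ⟨subset_erase.2 ⟨hS.1.1, hS.2⟩, hS.1.2⟩

lemma memberSubfamily_privateSets_subset [DecidableRel R] :
    (privateSets R X Y).memberSubfamily v ⊆ privateSets R (X.erase v) (Y.filter (¬R v ·)) := by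
  intro S hS
  rw [mem_memberSubfamily, mem_privateSets] at hS
  obtain ⟨⟨hSX, hS⟩, hv⟩ := hS
  exact mem_privateSets.2 ⟨subset_erase.2 ⟨(insert_subset_iff.1 hSX).2, hv⟩, hS.of_insert hv⟩

lemma memberSubfamily_privateSets_eq_empty (hv : ∀ u ∈ Y, ¬R v u) :
    (privateSets R X Y).memberSubfamily v = ∅ := by
  refine eq_empty_of_forall_notMem fun S hS => ?_
  rw [mem_memberSubfamily, mem_privateSets] at hS
  obtain ⟨u, hu, hvu, -⟩ := hS.1.2 v (mem_insert_self v S)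
  exact hv u hu hvu

/-- If `u` is the only neighbour of `v`, then `v ∈ S` forces `u` to be the private neighbour of
`v`, which excludes every other neighbour `x` of `u` from `S`. -/
lemma memberSubfamily_privateSets_subset_erase_erase [DecidableEq κ]
    (hvu : ∀ u' ∈ Y, R v u' → u' = u) (hxu : R x u) (hxv : x ≠ v) :
    (privateSets R X Y).memberSubfamily v ⊆ privateSets R ((X.erase v).erase x) (Y.erase u) := by
  intro S hS
  rw [mem_memberSubfamily, mem_privateSets] at hS
  obtain ⟨⟨hSX, hS⟩, hvS⟩ := hS
  obtain ⟨u', hu', hvu', huniq⟩ := hS v (mem_insert_self v S)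
  obtain rfl := hvu u' hu' hvu'
  have hnot : ∀ w ∈ S, ¬R w u' := fun w hw hwu =>
    hvS (huniq w (mem_insert_of_mem hw) hwu ▸ hw)
  refine mem_privateSets.2
    ⟨fun w hw => ?_, (hS.subset (subset_insert v S)).erase_of_forall_not hnot⟩
  have hwv : w ≠ v := by rintro rfl; exact hvS hw
  have hwx : w ≠ x := by rintro rfl; exact hnot w hw hxu
  exact mem_erase.2 ⟨hwx, mem_erase.2 ⟨hwv, hSX (mem_insert_of_mem hw)⟩⟩

lemma mem_privateSets_erase_erase [DecidableEq κ] (hS : S ∈ privateSets R X Y) (hvS : v ∉ S)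
    (huv : ∀ x ∈ X, R x u → x = v) : S ∈ privateSets R (X.erase v) (Y.erase u) := by
  rw [mem_privateSets] at hS ⊢
  refine ⟨subset_erase.2 ⟨hS.1, hvS⟩, hS.2.erase_of_forall_not fun w hw hwu => ?_⟩
  exact hvS (huv w (hS.1 hw) hwu ▸ hw)

lemma memberSubfamily_privateSets_subset_of_forall [DecidableEq κ]
    (huv : ∀ x ∈ X, R x u → x = v) :
    (privateSets R X Y).memberSubfamily v ⊆ privateSets R (X.erase v) (Y.erase u) := by
  intro S hS
  rw [mem_memberSubfamily, mem_privateSets] at hS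
  refine mem_privateSets_erase_erase (mem_privateSets.2 ⟨?_, hS.1.2.subset (subset_insert v S)⟩)
    hS.2 huv
  exact (subset_insert v S).trans hS.1.1

lemma nonMemberSubfamily_privateSets_subset_of_forall [DecidableEq κ]
    (huv : ∀ x ∈ X, R x u → x = v) :
    (privateSets R X Y).nonMemberSubfamily v ⊆ privateSets R (X.erase v) (Y.erase u) := by
  intro S hS
  rw [mem_nonMemberSubfamily] at hS
  exact mem_privateSets_erase_erase hS.1 hS.2 huv

end PrivateNeighbours

section Counting

variable {ι κ : Type*} [DecidableEq ι] [DecidableEq κ] {R : ι → κ → Prop} [DecidableRel R]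
  {X : Finset ι} {Y : Finset κ} {v : ι} {α : ℝ}

lemma pow_three_mul_card_memberSubfamily_privateSets_le (hα : 1 ≤ α) (hv : v ∈ X)
    (hY : ∀ u ∈ Y, ∃ x ∈ X, R x u ∧ x ≠ v)
    (ih : ∀ (X' : Finset ι) (Y' : Finset κ), #X' + #Y' < #X + #Y →
      (#(privateSets R X' Y') : ℝ) ≤ α ^ (#X' + #Y')) :
    α ^ 3 * #((privateSets R X Y).memberSubfamily v) ≤ α ^ (#X + #Y) := by
  have hX := card_erase_of_mem hv
  have hXpos : 0 < #X := card_pos.2 ⟨v, hv⟩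
  have hN := card_filter_add_card_filter_not (s := Y) (R v ·)
  obtain hN0 | hN1 | hN2 : #(Y.filter (R v ·)) = 0 ∨ #(Y.filter (R v ·)) = 1 ∨
      2 ≤ #(Y.filter (R v ·)) := by omega
  · rw [memberSubfamily_privateSets_eq_empty (filter_eq_empty_iff.1 (card_eq_zero.1 hN0))]
    simp only [card_empty, Nat.cast_zero, mul_zero]
    positivity
  · obtain ⟨u, hNu⟩ := card_eq_one.1 hN1
    have hu : u ∈ Y.filter (R v ·) := hNu ▸ mem_singleton_self u
    obtain ⟨x, hxX, hxu, hxv⟩ := hY u (mem_filter.1 hu).1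
    have hsub := memberSubfamily_privateSets_subset_erase_erase (X := X)
      (fun u' hu' hvu' => mem_singleton.1 (hNu ▸ mem_filter.2 ⟨hu', hvu'⟩)) hxu hxv
    have hX' := card_erase_of_mem (mem_erase.2 ⟨hxv, hxX⟩)
    have hY' := card_erase_of_mem (mem_filter.1 hu).1
    have hYpos : 0 < #Y := card_pos.2 ⟨u, (mem_filter.1 hu).1⟩
    have hXpos' : 0 < #(X.erase v) := card_pos.2 ⟨x, mem_erase.2 ⟨hxv, hxX⟩⟩
    refine pow_mul_card_le hα hsub (ih ((X.erase v).erase x) (Y.erase u) (by omega)) ?_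
    omega
  · exact pow_mul_card_le hα memberSubfamily_privateSets_subset
      (ih (X.erase v) (Y.filter (¬R v ·)) (by omega)) (by omega)

theorem card_privateSets_le (hα : α ^ 3 = α ^ 2 + 1) (R : ι → κ → Prop) (X : Finset ι)
    (Y : Finset κ) : (#(privateSets R X Y) : ℝ) ≤ α ^ (#X + #Y) := by
  classical
  have hα1 := (one_lt_of_pow_three_eq hα).le
  induction hm : #X + #Y using Nat.strong_induction_on generalizing X Y with
  | _ m ih =>
  replace ih : ∀ (X' : Finset ι) (Y' : Finset κ), #X' + #Y' < #X + #Y →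
      (#(privateSets R X' Y') : ℝ) ≤ α ^ (#X' + #Y') := fun X' Y' h => ih _ (hm ▸ h) X' Y' rfl
  subst hm
  obtain rfl | ⟨v, hv⟩ := X.eq_empty_or_nonempty
  · simpa [privateSets_empty_left] using one_le_pow₀ hα1
  have hX := card_erase_of_mem hv
  have hXpos : 0 < #X := card_pos.2 ⟨v, hv⟩
  rw [← card_memberSubfamily_add_card_nonMemberSubfamily v, Nat.cast_add]
  by_cases hu : ∃ u ∈ Y, ∀ x ∈ X, R x u → x = v
  · obtain ⟨u, hu, huv⟩ := hu
    have hY := card_erase_of_mem hu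
    have hYpos : 0 < #Y := card_pos.2 ⟨u, hu⟩
    have hbound := ih (X.erase v) (Y.erase u) (by omega)
    exact add_le_of_sq_mul_le (two_le_sq_of_pow_three_eq hα)
      (pow_mul_card_le hα1 (memberSubfamily_privateSets_subset_of_forall huv) hbound (by omega))
      (pow_mul_card_le hα1 (nonMemberSubfamily_privateSets_subset_of_forall huv) hbound
        (by omega)) (by positivity)
  · push Not at hu
    have hnon := pow_mul_card_le (k := 1) (m := #X + #Y) hα1
      nonMemberSubfamily_privateSets_subset (ih (X.erase v) Y (by omega)) (by omega)
    rw [pow_one] at hnon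
    exact add_le_of_pow_three_mul_le hα
      (pow_three_mul_card_memberSubfamily_privateSets_le hα1 hv hu ih) hnon

end Counting

section RomanDomination

variable {V : Type*} {G : SimpleGraph V} {f g : V → Fin 3} {v w : V}

lemma IsMinimalRDF.not_isRDF_update [DecidableEq V] (hf : IsMinimalRDF G f) {a : Fin 3}
    (ha : a < f v) : ¬IsRDF G (Function.update f v a) := by
  intro hg
  have := congrFun (hf.2 _ hg (update_le_self_iff.2 ha.le)) v
  rw [Function.update_self] at this
  exact ha.ne this

lemma IsMinimalRDF.ne_two_of_adj (hf : IsMinimalRDF G f) (hv : f v = 1) (hvw : G.Adj v w) :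
    f w ≠ 2 := by
  classical
  intro hw
  refine hf.not_isRDF_update (v := v) (a := 0) (by simp [hv]) fun x hx => ?_
  by_cases hxv : x = v
  · subst hxv
    exact ⟨w, hvw, by rwa [Function.update_of_ne hvw.ne.symm]⟩
  · rw [Function.update_of_ne hxv] at hx
    obtain ⟨u, hxu, hu⟩ := hf.1 x hx
    exact ⟨u, hxu, by rwa [Function.update_of_ne (by rintro rfl; simp [hv] at hu)]⟩

lemma IsMinimalRDF.exists_private (hf : IsMinimalRDF G f) (hv : f v = 2) :
    ∃ w, G.Adj v w ∧ f w = 0 ∧ ∀ u, G.Adj w u → f u = 2 → u = v := by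
  classical
  by_contra! h
  refine hf.not_isRDF_update (v := v) (a := 1) (by simp [hv]) fun x hx => ?_
  have hxv : x ≠ v := by rintro rfl; simp at hx
  rw [Function.update_of_ne hxv] at hx
  obtain ⟨u, hxu, hu⟩ := hf.1 x hx
  by_cases huv : u = v
  · subst huv
    obtain ⟨u', hxu', hu', hu'v⟩ := h x hxu.symm hx
    exact ⟨u', hxu', by rwa [Function.update_of_ne hu'v]⟩
  · exact ⟨u, hxu, by rwa [Function.update_of_ne huv]⟩

lemma IsMinimalRDF.eq_zero_iff (hf : IsMinimalRDF G f) (hw : f w ≠ 2) :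
    f w = 0 ↔ ∃ u, G.Adj w u ∧ f u = 2 := by
  refine ⟨hf.1 w, fun ⟨u, hwu, hu⟩ => ?_⟩
  have h1 : f w ≠ 1 := fun h1 => hf.ne_two_of_adj h1 hwu hu
  omega

lemma IsMinimalRDF.ext (hf : IsMinimalRDF G f) (hg : IsMinimalRDF G g)
    (h : ∀ v, f v = 2 ↔ g v = 2) : f = g := by
  funext w
  by_cases hw : f w = 2
  · rw [hw, (h w).1 hw]
  have hgw : g w ≠ 2 := fun h' => hw ((h w).2 h')
  have h0 : f w = 0 ↔ g w = 0 := by simp only [hf.eq_zero_iff hw, hg.eq_zero_iff hgw, h]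
  omega

lemma IsMinimalRDF.hasPrivateNbrs [Fintype V] [DecidableEq V] (hf : IsMinimalRDF G f) :
    HasPrivateNbrs G.Adj ({v | f v = 2} : Finset V)ᶜ {v | f v = 2} := by
  intro v hv
  obtain ⟨w, hvw, hw, huniq⟩ := hf.exists_private (by simpa using hv)
  exact ⟨w, by simp [hw], hvw, fun u hu huw => huniq u huw.symm (by simpa using hu)⟩

open Classical in
lemma numMinRDF_le_card_hasPrivateNbrs [Fintype V] :
    numMinRDF G ≤ #{T : Finset V | HasPrivateNbrs G.Adj Tᶜ T} := by
  rw [numMinRDF, ← Set.ncard_coe_finset]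
  refine Set.ncard_le_ncard_of_injOn (fun f => ({v | f v = 2} : Finset V))
    (fun f hf => by simpa using IsMinimalRDF.hasPrivateNbrs hf) fun f hf g hg hfg => ?_
  exact IsMinimalRDF.ext hf hg fun v => by simpa using congr(v ∈ $hfg)

end RomanDomination

section SplitGraph

variable {V : Type*} [Fintype V] [DecidableEq V] {G : SimpleGraph V} {C I T : Finset V}

lemma subset_or_subset_of_hasPrivateNbrs (hcover : ∀ v, v ∈ C ∨ v ∈ I)
    (hC : G.IsClique (C : Set V)) (hI : ∀ u ∈ I, ∀ w ∈ I, ¬G.Adj u w)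
    (hT : HasPrivateNbrs G.Adj Tᶜ T) : T ⊆ C ∨ T ⊆ I := by
  by_contra! h
  obtain ⟨⟨y, hyT, hyC⟩, ⟨x, hxT, hxI⟩⟩ := And.intro (not_subset.1 h.1) (not_subset.1 h.2)
  have hyI := (hcover y).resolve_left hyC
  obtain ⟨w, hwT, hyw, huniq⟩ := hT y hyT
  have hwC := (hcover w).resolve_right fun hwI => hI y hyI w hwI hyw
  have hxw : x ≠ w := by rintro rfl; exact mem_compl.1 hwT hxT
  exact hxI (huniq x hxT (hC ((hcover x).resolve_right hxI) hwC hxw) ▸ hyI)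

lemma HasPrivateNbrs.of_subset_independent (hcover : ∀ v, v ∈ C ∨ v ∈ I)
    (hI : ∀ u ∈ I, ∀ w ∈ I, ¬G.Adj u w) (hTI : T ⊆ I) (hT : HasPrivateNbrs G.Adj Tᶜ T) :
    HasPrivateNbrs G.Adj C T := by
  intro v hv
  obtain ⟨w, -, hvw, huniq⟩ := hT v hv
  exact ⟨w, (hcover w).resolve_right fun hwI => hI v (hTI hv) w hwI hvw, hvw, huniq⟩

lemma HasPrivateNbrs.of_subset_clique (hcover : ∀ v, v ∈ C ∨ v ∈ I)
    (hC : G.IsClique (C : Set V)) (hTC : T ⊆ C) (hT2 : 1 < #T)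
    (hT : HasPrivateNbrs G.Adj Tᶜ T) : HasPrivateNbrs G.Adj I T := by
  intro v hv
  obtain ⟨w, hwT, hvw, huniq⟩ := hT v hv
  refine ⟨w, (hcover w).resolve_left fun hwC => ?_, hvw, huniq⟩
  obtain ⟨v', hv', hv'v⟩ := exists_mem_ne hT2 v
  have hv'w : v' ≠ w := by rintro rfl; exact mem_compl.1 hwT hv'
  exact hv'v (huniq v' hv' (hC (hTC hv') hwC hv'w))

open Classical in
lemma card_hasPrivateNbrs_le_of_isSplit (hcover : ∀ v, v ∈ C ∨ v ∈ I)
    (hC : G.IsClique (C : Set V)) (hI : ∀ u ∈ I, ∀ w ∈ I, ¬G.Adj u w) :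
    #{T : Finset V | HasPrivateNbrs G.Adj Tᶜ T} ≤
      #C + #(privateSets G.Adj C I) + #(privateSets G.Adj I C) := by
  calc _ ≤ #(C.image ({·}) ∪ privateSets G.Adj C I ∪ privateSets G.Adj I C) :=
        card_le_card fun T hT => ?_
    _ ≤ _ := by grw [card_union_le, card_union_le, card_image_le]
  rw [mem_filter] at hT
  simp only [mem_union, mem_image, mem_privateSets]
  rcases subset_or_subset_of_hasPrivateNbrs hcover hC hI hT.2 with hTC | hTI
  · obtain rfl | hTne := T.eq_empty_or_nonempty
    · exact Or.inr ⟨empty_subset I, fun v hv => absurd hv (notMem_empty v)⟩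
    obtain hT1 | hT2 : #T = 1 ∨ 1 < #T := by have := hTne.card_pos; omega
    · obtain ⟨v, rfl⟩ := card_eq_one.1 hT1
      exact Or.inl (Or.inl ⟨v, singleton_subset_iff.1 hTC, rfl⟩)
    · exact Or.inl (Or.inr ⟨hTC, hT.2.of_subset_clique hcover hC hTC hT2⟩)
  · exact Or.inr ⟨hTI, hT.2.of_subset_independent hcover hI hTI⟩

end SplitGraph

theorem split_numMinRDF_upper_general (α : ℝ) (hroot : α ^ 3 = α ^ 2 + 1) :
    ∃ p : Polynomial ℝ, ∀ (V : Type) [Fintype V] (G : SimpleGraph V),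
      (∃ C I : Set V, C ∪ I = Set.univ ∧ Disjoint C I ∧ G.IsClique C ∧
        (∀ u ∈ I, ∀ w ∈ I, ¬ G.Adj u w)) →
      (numMinRDF G : ℝ) ≤ p.eval (Fintype.card V : ℝ) * α ^ (Fintype.card V) := by
  refine ⟨Polynomial.X + 2, fun V _ G ⟨C, I, hcover, hdisj, hC, hI⟩ => ?_⟩
  classical
  lift C to Finset V using C.toFinite
  lift I to Finset V using I.toFinite
  rw [← coe_union, coe_eq_univ] at hcover
  rw [disjoint_coe] at hdisj
  have hcard : #C + #I = Fintype.card V := by rw [← card_union_of_disjoint hdisj, hcover, card_univ]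
  have hnum : (numMinRDF G : ℝ) ≤ #C + #(privateSets G.Adj C I) + #(privateSets G.Adj I C) := by
    exact_mod_cast numMinRDF_le_card_hasPrivateNbrs.trans
      (card_hasPrivateNbrs_le_of_isSplit (fun v => mem_union.1 (hcover ▸ mem_univ v)) hC hI)
  have hCI := card_privateSets_le hroot G.Adj C I
  have hIC := card_privateSets_le hroot G.Adj I C
  rw [hcard] at hCI
  rw [add_comm, hcard] at hIC
  have hpow : 1 ≤ α ^ Fintype.card V := one_le_pow₀ (one_lt_of_pow_three_eq hroot).le
  have hCn : (#C : ℝ) ≤ Fintype.card V := by exact_mod_cast hcard ▸ Nat.le_add_right _ _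
  simp only [Polynomial.eval_add, Polynomial.eval_X, Polynomial.eval_ofNat]
  nlinarith [mul_le_mul_of_nonneg_left hpow (Nat.cast_nonneg (α := ℝ) (Fintype.card V))]

/-- Let `α` be the (unique) real root of `x³ = x² + 1` (with `1.46 < α < 1.47`). There is a
polynomial `p` such that every split graph of order `n` has at most `p(n) · αⁿ` minimal
Roman dominating functions. -/
theorem split_numMinRDF_upper (α : ℝ) (hroot : α ^ 3 = α ^ 2 + 1)
    (hlo : 1.46 < α) (hhi : α < 1.47) :
    ∃ p : Polynomial ℝ, ∀ (V : Type) [Fintype V] (G : SimpleGraph V),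
      (∃ C I : Set V, C ∪ I = Set.univ ∧ Disjoint C I ∧ G.IsClique C ∧
        (∀ u ∈ I, ∀ w ∈ I, ¬ G.Adj u w)) →
      (numMinRDF G : ℝ) ≤ p.eval (Fintype.card V : ℝ) * α ^ (Fintype.card V) :=
  split_numMinRDF_upper_general α hroot
end

section
/- Let G=(V,E) be a finite simple graph and let D ⊆ V be a minimal dominating set of G such that every v ∈ D has a private neighbor other than itself, i.e., P_{G,D}(v) is not a subset of {v} for all v ∈ D. Then the function f : V → {0,1,2} defined by f(v) = 2 for v ∈ D and f(v) = 0 for v ∉ D is a minimal Roman dominating function of G. -/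
/-- If `D` is a minimal dominating set in which every vertex has a private neighbor other
than itself, then the function assigning `2` to vertices of `D` and `0` elsewhere is a
minimal Roman dominating function. -/
theorem minimalDominating_to_minimalRDF {V : Type*} [Fintype V] (G : SimpleGraph V)
    (D : Set V) (hD : IsMinimalDominatingSet G D)
    (hpriv : ∀ v ∈ D, ¬ privateNbhd G D v ⊆ {v})
    (f : V → Fin 3) (hf2 : ∀ v ∈ D, f v = 2) (hf0 : ∀ v ∉ D, f v = 0) :
    IsMinimalRDF G f := by

  obtain ⟨hdom, -⟩ := hD
  have hRDF : IsRDF G f := by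
    intro v hv
    have hvD : v ∉ D := by
      intro h; rw [hf2 v h] at hv; exact absurd hv (by decide)
    have : v ∈ closedNbhdSet G D := by rw [hdom]; trivial
    simp only [closedNbhdSet, Set.mem_iUnion] at this
    obtain ⟨u, huD, hu⟩ := this
    rcases hu with h | h
    · exact absurd (h ▸ huD) hvD
    · exact ⟨u, h.symm, hf2 u huD⟩
  refine ⟨hRDF, fun g hg hle => funext fun v => ?_⟩
  by_cases hvD : v ∈ D
  · -- need g v = 2
    obtain ⟨w, hw, hwv⟩ := Set.not_subset.mp (hpriv v hvD)
    obtain ⟨hw1, hw2⟩ := hw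
    have hadj : G.Adj v w := by
      rcases hw1 with h | h
      · exact absurd h hwv
      · exact h
    have hwD : w ∉ D := by
      intro h
      exact hw2 (by
        simp only [closedNbhdSet, Set.mem_iUnion]
        exact ⟨w, ⟨h, fun hh => hwv hh⟩, Or.inl rfl⟩)
    have hgw : g w = 0 := by
      have := hle w
      rw [hf0 w hwD] at this
      exact Fin.le_zero_iff.mp this
    obtain ⟨u, hu, hgu⟩ := hg w hgw
    have hfu : f u = 2 := by
      have := hle u; rw [hgu] at this
      exact le_antisymm (Fin.le_last _) this
    have huD : u ∈ D := by
      by_contra h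
      rw [hf0 u h] at hfu; exact absurd hfu (by decide)
    have huv : u = v := by
      by_contra h
      exact hw2 (by
        simp only [closedNbhdSet, Set.mem_iUnion]
        exact ⟨u, ⟨huD, h⟩, Or.inr hu.symm⟩)
    rw [hf2 v hvD, ← huv, hgu]
  · rw [hf0 v hvD]
    have := hle v
    rw [hf0 v hvD] at this
    exact Fin.le_zero_iff.mp this
end
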